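/- arXiv:1410.1220 — 7 statements merged into one kernel-verified Lean document; each statement's English description precedes it below -/
import Mathlib

section
/- There exists a unique C¹ matrix-valued function R₂ᴳ : [0,T] → ℝ^{n×n} satisfying R₂ᴳ'(t) + (R₂ᴳ(t)ᵀ + R₂ᴳ(t))A + (1/2)(R₂ᴳ(t)ᵀ + R₂ᴳ(t))σσᵀ(R₂ᴳ(t)ᵀ + R₂ᴳ(t)) = 0 for all t ∈ [0,T] with R₂ᴳ(T) = Θ, and, given this R₂ᴳ, there exists a unique C¹ row-vector-valued function R₁ᴳ : [0,T] → ℝ^{1×n} satisfying R₁ᴳ'(t) + R₁ᴳ(t)(A + σσᵀ(R₂ᴳ(t)ᵀ + R₂ᴳ(t))) + Bᵀ(R₂ᴳ(t)ᵀ + R₂ᴳ(t)) = 0 for all t ∈ [0,T] with R₁ᴳ(T) = θ. -/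
/-!
Write `Q = σσᵀ`. For `P = Rᵀ + R` the equation for `R₂ᴳ` symmetrises to the matrix Riccati
equation `P' = -(Aᵀ P + P A + P Q P)`, `P(T) = Θᵀ + Θ`, which is linearised by `P = Y X⁻¹`: the
costate `Y(t) = exp((T - t)Aᵀ)(Θᵀ + Θ)` and the state `X(t) = exp((t - T)A)(1 - M(t)(Θᵀ + Θ))`,
with `M(t) = ∫ₜᵀ exp((T - s)A) Q exp((T - s)Aᵀ) ds` the controllability Gramian, solve
`Y' = -Aᵀ Y`, `X' = A X + Q Y`, `X(T) = 1`, `Y(T) = Θᵀ + Θ`. As `M(t) ≥ 0` for `t ≤ T` and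
`Θᵀ + Θ ≤ 0`, `X(t)` is invertible there, and `P` is symmetric because `Xᵀ Y - Yᵀ X` is constant.
Then `R₂ᴳ = Θ + ∫ₜᵀ (P A + ½ P Q P)` and `R₁ᴳ = (θ + ∫ₜᵀ Bᵀ Y) X⁻¹`.

For uniqueness, if `S` is another solution then `Z = (Sᵀ + S) X - Y` satisfies the linear equation
`Z' = -(Aᵀ + (Sᵀ + S) Q) Z` with `Z(T) = 0`, so `Sᵀ + S = P` by Grönwall, and then `S - R₂ᴳ` is
constant. The equation for `R₁ᴳ` is linear, so its uniqueness is again Grönwall.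
-/

open Matrix Set MeasureTheory NormedSpace

attribute [local instance] Matrix.normedAddCommGroup Matrix.normedSpace

section

variable {E : Type*} [NormedAddCommGroup E] [NormedSpace ℝ E] {a b : ℝ} {Z : ℝ → E}

theorem eqOn_zero_of_hasDerivWithinAt_clm_apply {L : ℝ → E →L[ℝ] E}
    (hL : ContinuousOn L (Icc a b))
    (hZ : ∀ t ∈ Icc a b, HasDerivWithinAt Z (L t (Z t)) (Icc a b) t) (hb : Z b = 0) :
    EqOn Z 0 (Icc a b) := by
  obtain ⟨C, hC⟩ := isCompact_Icc.exists_bound_of_continuousOn hL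
  have hLip : ∀ t ∈ Ioc a b, LipschitzOnWith C.toNNReal (L t) univ := fun t ht =>
    have hCt := hC t (Ioc_subset_Icc_self ht)
    ((L t).lipschitz.weaken
      ((Real.le_toNNReal_iff_coe_le ((norm_nonneg _).trans hCt)).2 hCt)).lipschitzOnWith
  have hZ' : ∀ t ∈ Ioc a b, HasDerivWithinAt Z (L t (Z t)) (Iic t) t := fun t ht =>
    (hZ t (Ioc_subset_Icc_self ht)).mono_of_mem_nhdsWithin
      (Icc_mem_nhdsLE_of_mem ⟨ht.1, ht.2⟩)
  exact ODE_solution_unique_of_mem_Icc_left hLip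
    (fun t ht => (hZ t ht).continuousWithinAt) hZ' (fun _ _ => mem_univ _)
    continuousOn_const
    (fun t _ => by simpa [Pi.zero_def] using hasDerivWithinAt_const t (Iic t) (0 : E))
    (fun _ _ => mem_univ _) hb

theorem eqOn_zero_of_hasDerivWithinAt_zero
    (hZ : ∀ t ∈ Icc a b, HasDerivWithinAt Z 0 (Icc a b) t) (hb : Z b = 0) :
    EqOn Z 0 (Icc a b) :=
  eqOn_zero_of_hasDerivWithinAt_clm_apply (L := 0) continuousOn_const (by simpa using hZ) hb

theorem contDiffOn_one_of_hasDerivWithinAt {s : Set ℝ} {f f' : ℝ → E} (hs : UniqueDiffOn ℝ s)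
    (hf : ∀ t ∈ s, HasDerivWithinAt f (f' t) s t) (hf' : ContinuousOn f' s) :
    ContDiffOn ℝ 1 f s := by
  rw [show (1 : WithTop ℕ∞) = 0 + 1 from rfl, contDiffOn_succ_iff_derivWithin hs]
  refine ⟨fun t ht => (hf t ht).differentiableWithinAt, by simp, ?_⟩
  exact contDiffOn_zero.2 (hf'.congr fun t ht => (hf t ht).derivWithin (hs t ht))

theorem ContinuousOn.integral_hasDerivWithinAt_left [CompleteSpace E] {f : ℝ → E} {t : ℝ}
    (hf : ContinuousOn f (Icc a b)) (ht : t ∈ Icc a b) :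
    HasDerivWithinAt (fun u => ∫ x in u..b, f x) (-f t) (Icc a b) t := by
  have : Fact (t ∈ Icc a b) := ⟨ht⟩
  exact intervalIntegral.integral_hasDerivWithinAt_left
    ((hf.mono (Icc_subset_Icc_left ht.1)).intervalIntegrable_of_Icc ht.2)
    (hf.stronglyMeasurableAtFilter_nhdsWithin measurableSet_Icc t) (hf t ht)

theorem Continuous.integral_hasDerivAt_left [CompleteSpace E] {f : ℝ → E} (hf : Continuous f)
    (b t : ℝ) : HasDerivAt (fun u => ∫ x in u..b, f x) (-f t) t :=
  intervalIntegral.integral_hasDerivAt_left (hf.intervalIntegrable _ _)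
    hf.stronglyMeasurable.stronglyMeasurableAtFilter hf.continuousAt

end

namespace Matrix

section Calculus

variable {l m p : Type*} [Fintype l] [Fintype m] [Fintype p]

noncomputable def mulCLM : Matrix l m ℝ →L[ℝ] Matrix m p ℝ →L[ℝ] Matrix l p ℝ :=
  (mulLinearMap ℝ).toContinuousBilinearMap

noncomputable def transposeCLM : Matrix l m ℝ →L[ℝ] Matrix m l ℝ :=
  LinearMap.toContinuousLinearMap (transposeLinearEquiv l m ℝ ℝ).toLinearMap

@[simp]
theorem transposeCLM_apply (M : Matrix l m ℝ) : transposeCLM M = Mᵀ := rfl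

variable {f : ℝ → Matrix l m ℝ} {g : ℝ → Matrix m p ℝ} {f' : Matrix l m ℝ} {g' : Matrix m p ℝ}
  {s : Set ℝ} {t : ℝ}

theorem _root_.HasDerivWithinAt.matrix_mul (hf : HasDerivWithinAt f f' s t)
    (hg : HasDerivWithinAt g g' s t) :
    HasDerivWithinAt (fun u => f u * g u) (f' * g t + f t * g') s t := by
  rw [add_comm]
  exact mulCLM.hasDerivWithinAt_of_bilinear hf hg

theorem _root_.HasDerivAt.matrix_mul (hf : HasDerivAt f f' t) (hg : HasDerivAt g g' t) :
    HasDerivAt (fun u => f u * g u) (f' * g t + f t * g') t :=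
  hasDerivWithinAt_univ.mp (hf.hasDerivWithinAt.matrix_mul hg.hasDerivWithinAt)

theorem _root_.HasDerivWithinAt.matrix_transpose (hf : HasDerivWithinAt f f' s t) :
    HasDerivWithinAt (fun u => (f u)ᵀ) f'ᵀ s t :=
  transposeCLM.hasFDerivAt.comp_hasDerivWithinAt (f := f) t hf

theorem _root_.HasDerivAt.matrix_transpose (hf : HasDerivAt f f' t) :
    HasDerivAt (fun u => (f u)ᵀ) f'ᵀ t :=
  transposeCLM.hasFDerivAt.comp_hasDerivAt (f := f) t hf

theorem _root_.ContinuousOn.matrix_mul (hf : ContinuousOn f s) (hg : ContinuousOn g s) :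
    ContinuousOn (fun u => f u * g u) s :=
  (mulCLM.continuous.comp_continuousOn hf).clm_apply hg

theorem eqOn_zero_of_hasDerivWithinAt_mul_left {a b : ℝ} {K : ℝ → Matrix l l ℝ}
    {Z : ℝ → Matrix l m ℝ} (hK : ContinuousOn K (Icc a b))
    (hZ : ∀ t ∈ Icc a b, HasDerivWithinAt Z (K t * Z t) (Icc a b) t) (hb : Z b = 0) :
    EqOn Z 0 (Icc a b) :=
  eqOn_zero_of_hasDerivWithinAt_clm_apply (L := fun t => mulCLM (K t))
    (mulCLM.continuous.comp_continuousOn hK) hZ hb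

theorem eqOn_zero_of_hasDerivWithinAt_mul_right {a b : ℝ} {K : ℝ → Matrix m m ℝ}
    {Z : ℝ → Matrix l m ℝ} (hK : ContinuousOn K (Icc a b))
    (hZ : ∀ t ∈ Icc a b, HasDerivWithinAt Z (Z t * K t) (Icc a b) t) (hb : Z b = 0) :
    EqOn Z 0 (Icc a b) :=
  fun t ht => by
    have h := eqOn_zero_of_hasDerivWithinAt_mul_left (Z := fun u => (Z u)ᵀ)
      (transposeCLM.continuous.comp_continuousOn hK)
      (fun u hu => by simpa using (hZ u hu).matrix_transpose) (by simp [hb]) ht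
    simpa using congrArg transpose h

end Calculus

section SquareCalculus

variable {m : Type*} [Fintype m] [DecidableEq m]

open scoped Norms.Operator in
theorem hasDerivAt_exp_smul (A : Matrix m m ℝ) (t : ℝ) :
    HasDerivAt (fun u : ℝ => exp (u • A)) (A * exp (t • A)) t :=
  have : CompleteSpace (Matrix m m ℝ) := FiniteDimensional.complete ℝ _
  hasDerivAt_exp_smul_const' A t

open scoped Norms.Operator in
theorem _root_.HasDerivAt.matrix_inv {X : ℝ → Matrix m m ℝ} {X' : Matrix m m ℝ} {t : ℝ}
    (hX : HasDerivAt X X' t) (hu : IsUnit (X t)) :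
    HasDerivAt (fun s => (X s)⁻¹) (-((X t)⁻¹ * X' * (X t)⁻¹)) t := by
  have : CompleteSpace (Matrix m m ℝ) := FiniteDimensional.complete ℝ _
  have h := (hu.unit_spec ▸ hasFDerivAt_ringInverse (𝕜 := ℝ) hu.unit).comp_hasDerivAt t hX
  rw [_root_.neg_apply, ContinuousLinearMap.mulLeftRight_apply, ← Ring.inverse_unit,
    hu.unit_spec] at h
  simp only [nonsing_inv_eq_ringInverse]
  exact h

theorem hasDerivAt_exp_const_sub_smul (A : Matrix m m ℝ) (c t : ℝ) :
    HasDerivAt (fun u : ℝ => exp ((c - u) • A)) (-(A * exp ((c - t) • A))) t := by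
  have h := (hasDerivAt_exp_smul A (c - t)).scomp t ((hasDerivAt_id' t).const_sub c)
  rwa [neg_one_smul] at h

theorem hasDerivAt_exp_sub_const_smul (A : Matrix m m ℝ) (c t : ℝ) :
    HasDerivAt (fun u : ℝ => exp ((u - c) • A)) (A * exp ((t - c) • A)) t := by
  have h := (hasDerivAt_exp_smul A (t - c)).scomp t ((hasDerivAt_id' t).sub_const c)
  rwa [one_smul] at h

theorem exp_neg_smul_mul_exp_smul (A : Matrix m m ℝ) (s : ℝ) :
    exp (-s • A) * exp (s • A) = 1 := by
  rw [← exp_add_of_commute _ _ (((Commute.refl A).smul_left _).smul_right s), ← add_smul,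
    neg_add_cancel, zero_smul, exp_zero]

end SquareCalculus

end Matrix

theorem Matrix.PosSemidef.intervalIntegral {m : Type*} [Fintype m] {f : ℝ → Matrix m m ℝ}
    {a b : ℝ} (hab : a ≤ b) (hf : ContinuousOn f (Icc a b))
    (hpsd : ∀ s ∈ Icc a b, (f s).PosSemidef) : (∫ s in a..b, f s).PosSemidef := by
  have hint := hf.intervalIntegrable_of_Icc (E := Matrix m m ℝ) (μ := volume) hab
  refine .of_dotProduct_mulVec_nonneg ?_ fun v => ?_
  · rw [IsHermitian, conjTranspose_eq_transpose_of_trivial, ← transposeCLM_apply]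
    refine (ContinuousLinearMap.intervalIntegral_comp_comm (𝕜 := ℝ) (E := Matrix m m ℝ)
      (F := Matrix m m ℝ) transposeCLM hint).symm.trans ?_
    refine intervalIntegral.integral_congr fun s hs => ?_
    have := (hpsd s (uIcc_of_le hab ▸ hs)).1
    rwa [IsHermitian, conjTranspose_eq_transpose_of_trivial] at this
  · let q : Matrix m m ℝ →L[ℝ] ℝ := LinearMap.toContinuousLinearMap
      { toFun := fun M => v ⬝ᵥ M *ᵥ v
        map_add' := fun M N => by simp [add_mulVec, dotProduct_add]
        map_smul' := fun c M => by simp [smul_mulVec, dotProduct_smul] }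
    have h := ContinuousLinearMap.intervalIntegral_comp_comm (𝕜 := ℝ) (E := Matrix m m ℝ)
      (F := ℝ) q hint
    simp only [star_trivial]
    refine le_of_le_of_eq (intervalIntegral.integral_nonneg hab fun s hs => ?_) h
    have := (hpsd s hs).dotProduct_mulVec_nonneg v
    rwa [star_trivial] at this

theorem Matrix.isUnit_one_add_mul_of_posSemidef {m : Type*} [Fintype m] [DecidableEq m]
    {M N : Matrix m m ℝ} (hM : M.PosSemidef) (hN : N.PosSemidef) : IsUnit (1 + M * N) := by
  rw [isUnit_iff_isUnit_det, isUnit_iff_ne_zero]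
  intro hdet
  obtain ⟨v, hv, h⟩ := exists_mulVec_eq_zero_iff.mpr hdet
  have hv_eq : v = -(M *ᵥ (N *ᵥ v)) := by
    rw [add_mulVec, one_mulVec, ← mulVec_mulVec] at h
    exact eq_neg_of_add_eq_zero_left h
  -- `v ⬝ᵥ N v = -(N v ⬝ᵥ M (N v))` is both nonnegative and nonpositive
  have hnonneg : 0 ≤ v ⬝ᵥ (N *ᵥ v) := by simpa using hN.dotProduct_mulVec_nonneg v
  have hnonpos : v ⬝ᵥ (N *ᵥ v) ≤ 0 := by
    have hM' : 0 ≤ (N *ᵥ v) ⬝ᵥ (M *ᵥ (N *ᵥ v)) := by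
      simpa using hM.dotProduct_mulVec_nonneg (N *ᵥ v)
    nth_rewrite 1 [hv_eq]
    rw [neg_dotProduct, dotProduct_comm]
    exact neg_nonpos.mpr hM'
  have hNv : N *ᵥ v = 0 :=
    (hN.dotProduct_mulVec_zero_iff v).mp (by simpa using le_antisymm hnonpos hnonneg)
  exact hv (by simpa [hNv] using hv_eq)

theorem neg_transpose_add_self_posSemidef {m : Type*} {Θ : Matrix m m ℝ}
    (hΘ : (-Θ).PosSemidef) : (-(Θᵀ + Θ)).PosSemidef := by
  rw [neg_add, ← transpose_neg]
  exact hΘ.transpose.add hΘ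

namespace Riccati

section Linearization

variable {m : Type*} [Fintype m] [DecidableEq m] (T : ℝ) (A Q G : Matrix m m ℝ)

noncomputable def costate (t : ℝ) : Matrix m m ℝ := exp ((T - t) • Aᵀ) * G

noncomputable def gramian (t : ℝ) : Matrix m m ℝ :=
  ∫ s in t..T, (exp ((T - s) • Aᵀ))ᵀ * Q * exp ((T - s) • Aᵀ)

noncomputable def state (t : ℝ) : Matrix m m ℝ := exp ((t - T) • A) * (1 - gramian T A Q t * G)

noncomputable def solution (t : ℝ) : Matrix m m ℝ := costate T A G t * (state T A Q G t)⁻¹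

variable {T A Q G}

theorem costate_self : costate T A G T = G := by simp [costate]

theorem hasDerivAt_costate (t : ℝ) : HasDerivAt (costate T A G) (-(Aᵀ * costate T A G t)) t := by
  have h := (hasDerivAt_exp_const_sub_smul Aᵀ T t).matrix_mul (hasDerivAt_const t G)
  rw [mul_zero, add_zero, neg_mul, Matrix.mul_assoc] at h
  exact h

theorem gramian_self : gramian T A Q T = 0 := intervalIntegral.integral_same

theorem continuous_gramian_integrand :
    Continuous fun s => (exp ((T - s) • Aᵀ))ᵀ * Q * exp ((T - s) • Aᵀ) := by
  have h : Continuous fun s : ℝ => exp ((T - s) • Aᵀ) :=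
    continuous_iff_continuousAt.2 fun s => (hasDerivAt_exp_const_sub_smul Aᵀ T s).continuousAt
  exact (h.matrix_transpose.matrix_mul continuous_const).matrix_mul h

theorem hasDerivAt_gramian (t : ℝ) :
    HasDerivAt (gramian T A Q) (-((exp ((T - t) • Aᵀ))ᵀ * Q * exp ((T - t) • Aᵀ))) t :=
  continuous_gramian_integrand.integral_hasDerivAt_left T t

theorem gramian_posSemidef (hQ : Q.PosSemidef) {t : ℝ} (ht : t ≤ T) :
    (gramian T A Q t).PosSemidef :=
  .intervalIntegral ht continuous_gramian_integrand.continuousOn fun s _ => by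
    simpa only [conjTranspose_eq_transpose_of_trivial] using
      hQ.conjTranspose_mul_mul_same (exp ((T - s) • Aᵀ))

theorem state_self : state T A Q G T = 1 := by simp [state, gramian_self]

theorem hasDerivAt_state (t : ℝ) :
    HasDerivAt (state T A Q G) (A * state T A Q G t + Q * costate T A G t) t := by
  have h := (hasDerivAt_exp_sub_const_smul A T t).matrix_mul ((hasDerivAt_const t 1).sub
    ((hasDerivAt_gramian (T := T) (A := A) (Q := Q) t).matrix_mul (hasDerivAt_const t G)))
  have hinv : exp ((t - T) • A) * (exp ((T - t) • Aᵀ))ᵀ = 1 := by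
    rw [← exp_transpose, transpose_smul, transpose_transpose, ← neg_sub,
      exp_neg_smul_mul_exp_smul]
  refine h.congr_deriv ?_
  rw [costate, state, Pi.sub_apply, mul_zero, add_zero, zero_sub, neg_mul, neg_neg,
    ← Matrix.one_mul (Q * _), ← hinv]
  simp only [Matrix.mul_assoc]

theorem isUnit_state (hQ : Q.PosSemidef) (hG : (-G).PosSemidef) {t : ℝ} (ht : t ≤ T) :
    IsUnit (state T A Q G t) := by
  refine (Matrix.isUnit_exp _).mul ?_
  rw [sub_eq_add_neg, ← Matrix.mul_neg]
  exact isUnit_one_add_mul_of_posSemidef (gramian_posSemidef hQ ht) hG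

theorem transpose_state_mul_costate (hQ : Q.IsSymm) (hG : G.IsSymm) (t : ℝ) :
    (state T A Q G t)ᵀ * costate T A G t = (costate T A G t)ᵀ * state T A Q G t := by
  have hd : ∀ s, HasDerivAt (fun u => (state T A Q G u)ᵀ * costate T A G u
      - (costate T A G u)ᵀ * state T A Q G u) 0 s := by
    intro s
    refine (((hasDerivAt_state s).matrix_transpose.matrix_mul (hasDerivAt_costate s)).sub
      ((hasDerivAt_costate s).matrix_transpose.matrix_mul (hasDerivAt_state s))).congr_deriv ?_
    simp only [transpose_add, transpose_mul, transpose_neg, transpose_transpose, hQ.eq]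
    noncomm_ring
  have h := is_const_of_deriv_eq_zero (fun s => (hd s).differentiableAt)
    (fun s => (hd s).deriv) t T
  rw [state_self, costate_self, transpose_one, Matrix.one_mul, Matrix.mul_one, hG.eq,
    sub_self] at h
  exact sub_eq_zero.mp h

theorem solution_self : solution T A Q G T = G := by simp [solution, state_self, costate_self]

theorem solution_isSymm (hQ : Q.IsSymm) (hG : G.IsSymm) {t : ℝ} (hu : IsUnit (state T A Q G t)) :
    (solution T A Q G t).IsSymm := by
  have hXW : state T A Q G t * (state T A Q G t)⁻¹ = 1 :=
    mul_nonsing_inv _ ((isUnit_iff_isUnit_det _).mp hu)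
  set X := state T A Q G t
  set Y := costate T A G t
  calc (Y * X⁻¹)ᵀ = (X⁻¹)ᵀ * (Yᵀ * X) * X⁻¹ := by
        rw [transpose_mul, Matrix.mul_assoc, Matrix.mul_assoc, hXW, Matrix.mul_one]
    _ = (X * X⁻¹)ᵀ * Y * X⁻¹ := by
        rw [← transpose_state_mul_costate hQ hG, transpose_mul]
        simp only [Matrix.mul_assoc]
        rfl
    _ = Y * X⁻¹ := by rw [hXW, transpose_one, Matrix.one_mul]

theorem hasDerivAt_solution {t : ℝ} (hu : IsUnit (state T A Q G t)) :
    HasDerivAt (solution T A Q G)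
      (-(Aᵀ * solution T A Q G t + solution T A Q G t * A
        + solution T A Q G t * Q * solution T A Q G t)) t := by
  refine ((hasDerivAt_costate t).matrix_mul ((hasDerivAt_state t).matrix_inv hu)).congr_deriv ?_
  have hXW : state T A Q G t * (state T A Q G t)⁻¹ = 1 :=
    mul_nonsing_inv _ ((isUnit_iff_isUnit_det _).mp hu)
  simp only [solution]
  rw [show ∀ Y W X : Matrix m m ℝ, -(Aᵀ * Y) * W + Y * -(W * (A * X + Q * Y) * W)
      = -(Aᵀ * (Y * W) + Y * W * A * (X * W) + Y * W * Q * (Y * W)) from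
      fun _ _ _ => by noncomm_ring, hXW, Matrix.mul_one]

theorem mul_state_eq_costate {a : ℝ} {P : ℝ → Matrix m m ℝ}
    (hP : ∀ t ∈ Icc a T, HasDerivWithinAt P (-(Aᵀ * P t + P t * A + P t * Q * P t)) (Icc a T) t)
    (hPT : P T = G) {t : ℝ} (ht : t ∈ Icc a T) : P t * state T A Q G t = costate T A G t := by
  have hZ := eqOn_zero_of_hasDerivWithinAt_mul_left
    (Z := fun u => P u * state T A Q G u - costate T A G u) (K := fun u => -(Aᵀ + P u * Q))
    ((continuousOn_const.add (ContinuousOn.matrix_mul (fun u hu => (hP u hu).continuousWithinAt)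
      continuousOn_const)).neg) (fun u hu => ?_) (by simp [state_self, costate_self, hPT]) ht
  · exact sub_eq_zero.mp hZ
  refine (((hP u hu).matrix_mul (hasDerivAt_state u).hasDerivWithinAt).sub
    (hasDerivAt_costate u).hasDerivWithinAt).congr_deriv ?_
  simp only [costate, Matrix.mul_sub, Matrix.add_mul, Matrix.mul_add, Matrix.neg_mul,
    Matrix.mul_assoc]
  abel

theorem eqOn_solution (hQ : Q.PosSemidef) (hG : (-G).PosSemidef) {a : ℝ} {P : ℝ → Matrix m m ℝ}
    (hP : ∀ t ∈ Icc a T, HasDerivWithinAt P (-(Aᵀ * P t + P t * A + P t * Q * P t)) (Icc a T) t)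
    (hPT : P T = G) : EqOn P (solution T A Q G) (Icc a T) := fun t ht => by
  rw [solution, ← mul_state_eq_costate hP hPT ht, Matrix.mul_assoc,
    mul_nonsing_inv _ ((isUnit_iff_isUnit_det _).mp (isUnit_state hQ hG ht.2)), Matrix.mul_one]

theorem continuousOn_solution (hQ : Q.PosSemidef) (hG : (-G).PosSemidef) :
    ContinuousOn (solution T A Q G) (Iic T) := fun _ ht =>
  (hasDerivAt_solution (isUnit_state hQ hG ht)).continuousAt.continuousWithinAt

end Linearization

section Drift

variable {m : Type*} [Fintype m] {A Q : Matrix m m ℝ}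

variable (A Q) in
noncomputable def drift (P : Matrix m m ℝ) : Matrix m m ℝ := P * A + (1 / 2 : ℝ) • (P * Q * P)

theorem transpose_drift_add_drift (hQ : Q.IsSymm) {P : Matrix m m ℝ} (hP : P.IsSymm) :
    (drift A Q P)ᵀ + drift A Q P = Aᵀ * P + P * A + P * Q * P := by
  simp only [drift, transpose_add, transpose_smul, transpose_mul, hQ.eq, hP.eq, Matrix.mul_assoc]
  module

theorem continuousOn_drift {s : Set ℝ} {P : ℝ → Matrix m m ℝ} (hP : ContinuousOn P s) :
    ContinuousOn (fun t => drift A Q (P t)) s := by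
  refine (hP.matrix_mul continuousOn_const).add ?_
  exact ((hP.matrix_mul continuousOn_const).matrix_mul hP).const_smul (1 / 2 : ℝ)

end Drift

section R₂

variable {m : Type*} [Fintype m] [DecidableEq m] {T a : ℝ} {A Q Θ : Matrix m m ℝ}

variable (T A Q Θ) in
noncomputable def R₂ (t : ℝ) : Matrix m m ℝ :=
  Θ + ∫ s in t..T, drift A Q (solution T A Q (Θᵀ + Θ) s)

theorem R₂_self : R₂ T A Q Θ T = Θ := by simp [R₂]

theorem hasDerivWithinAt_R₂ (hQ : Q.PosSemidef) (hΘ : (-Θ).PosSemidef) {t : ℝ}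
    (ht : t ∈ Icc a T) :
    HasDerivWithinAt (R₂ T A Q Θ) (-drift A Q (solution T A Q (Θᵀ + Θ) t)) (Icc a T) t := by
  have h := continuousOn_drift (A := A) (Q := Q) ((continuousOn_solution (T := T) (A := A) hQ
    (neg_transpose_add_self_posSemidef hΘ)).mono (Icc_subset_Iic_self (a := a)))
  exact (h.integral_hasDerivWithinAt_left ht).const_add Θ

theorem transpose_R₂_add_R₂ (hQ : Q.PosSemidef) (hΘ : (-Θ).PosSemidef) {t : ℝ}
    (ht : t ∈ Icc a T) : (R₂ T A Q Θ t)ᵀ + R₂ T A Q Θ t = solution T A Q (Θᵀ + Θ) t := by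
  have hG := neg_transpose_add_self_posSemidef hΘ
  refine sub_eq_zero.mp (eqOn_zero_of_hasDerivWithinAt_zero
    (Z := fun u => (R₂ T A Q Θ u)ᵀ + R₂ T A Q Θ u - solution T A Q (Θᵀ + Θ) u) (fun u hu => ?_)
    (by simp [R₂_self, solution_self]) ht)
  have hR := hasDerivWithinAt_R₂ (A := A) hQ hΘ hu
  refine ((hR.matrix_transpose.add hR).sub
    (hasDerivAt_solution (isUnit_state hQ hG hu.2)).hasDerivWithinAt).congr_deriv ?_
  rw [transpose_neg, ← neg_add, transpose_drift_add_drift (isHermitian_iff_isSymm.mp hQ.1)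
    (solution_isSymm (isHermitian_iff_isSymm.mp hQ.1) (isSymm_transpose_add_self Θ)
      (isUnit_state hQ hG hu.2)), sub_neg_eq_add, neg_add_cancel]

theorem contDiffOn_R₂ (hQ : Q.PosSemidef) (hΘ : (-Θ).PosSemidef) (haT : a < T) :
    ContDiffOn ℝ 1 (R₂ T A Q Θ) (Icc a T) :=
  contDiffOn_one_of_hasDerivWithinAt (uniqueDiffOn_Icc haT)
    (fun _ ht => hasDerivWithinAt_R₂ hQ hΘ ht) (continuousOn_drift ((continuousOn_solution hQ
      (neg_transpose_add_self_posSemidef hΘ)).mono Icc_subset_Iic_self)).neg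

theorem R₂_ode (hQ : Q.PosSemidef) (hΘ : (-Θ).PosSemidef) (haT : a < T) {t : ℝ}
    (ht : t ∈ Icc a T) :
    derivWithin (R₂ T A Q Θ) (Icc a T) t + ((R₂ T A Q Θ t)ᵀ + R₂ T A Q Θ t) * A
      + (1 / 2 : ℝ) • (((R₂ T A Q Θ t)ᵀ + R₂ T A Q Θ t) * Q * ((R₂ T A Q Θ t)ᵀ + R₂ T A Q Θ t))
      = 0 := by
  have hd : derivWithin (R₂ T A Q Θ) (Icc a T) t = -drift A Q (solution T A Q (Θᵀ + Θ) t) :=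
    (hasDerivWithinAt_R₂ hQ hΘ ht).derivWithin (uniqueDiffOn_Icc haT t ht)
  rw [hd, transpose_R₂_add_R₂ hQ hΘ ht, add_assoc]
  exact neg_add_cancel _

theorem eqOn_R₂ (hQ : Q.PosSemidef) (hΘ : (-Θ).PosSemidef) {S : ℝ → Matrix m m ℝ}
    (hS : ContDiffOn ℝ 1 S (Icc a T))
    (hS_ode : ∀ t ∈ Icc a T, derivWithin S (Icc a T) t + ((S t)ᵀ + S t) * A
      + (1 / 2 : ℝ) • (((S t)ᵀ + S t) * Q * ((S t)ᵀ + S t)) = 0)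
    (hST : S T = Θ) : EqOn S (R₂ T A Q Θ) (Icc a T) := by
  have hQs := isHermitian_iff_isSymm.mp hQ.1
  have hS' : ∀ t ∈ Icc a T, HasDerivWithinAt S (-drift A Q ((S t)ᵀ + S t)) (Icc a T) t := by
    intro t ht
    have h : derivWithin S (Icc a T) t + drift A Q ((S t)ᵀ + S t) = 0 := by
      rw [← hS_ode t ht, add_assoc]
      rfl
    rw [← eq_neg_of_add_eq_zero_left h]
    exact (hS.differentiableOn one_ne_zero t ht).hasDerivWithinAt
  have hP : EqOn (fun u => (S u)ᵀ + S u) (solution T A Q (Θᵀ + Θ)) (Icc a T) :=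
    eqOn_solution hQ (neg_transpose_add_self_posSemidef hΘ) (fun t ht =>
      ((hS' t ht).matrix_transpose.add (hS' t ht)).congr_deriv (by
        rw [transpose_neg, ← neg_add, transpose_drift_add_drift hQs (isSymm_transpose_add_self _)]))
      (by simp [hST])
  intro t ht
  refine sub_eq_zero.mp (eqOn_zero_of_hasDerivWithinAt_zero (Z := fun u => S u - R₂ T A Q Θ u)
    (fun u hu => ((hS' u hu).sub (hasDerivWithinAt_R₂ hQ hΘ hu)).congr_deriv ?_)
    (by simp [hST, R₂_self]) ht)
  rw [show (S u)ᵀ + S u = solution T A Q (Θᵀ + Θ) u from hP hu, sub_self]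

end R₂

section R₁

variable {l m : Type*} [Fintype l] [Fintype m] [DecidableEq m] {T a : ℝ} {A Q G : Matrix m m ℝ}

variable (T A Q G) in
noncomputable def R₁ (C θ : Matrix l m ℝ) (t : ℝ) : Matrix l m ℝ :=
  (θ + ∫ s in t..T, C * costate T A G s) * (state T A Q G t)⁻¹

variable {C θ : Matrix l m ℝ}

theorem R₁_self : R₁ T A Q G C θ T = θ := by simp [R₁, state_self]

theorem hasDerivAt_R₁ {t : ℝ} (hu : IsUnit (state T A Q G t)) :
    HasDerivAt (R₁ T A Q G C θ)
      (-(R₁ T A Q G C θ t * (A + Q * solution T A Q G t) + C * solution T A Q G t)) t := by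
  have hCY : Continuous fun s => C * costate T A G s :=
    continuous_const.matrix_mul
      (continuous_iff_continuousAt.2 fun s => (hasDerivAt_costate s).continuousAt)
  refine (((hCY.integral_hasDerivAt_left T t).const_add θ).matrix_mul
    ((hasDerivAt_state t).matrix_inv hu)).congr_deriv ?_
  simp only [R₁, solution]
  set X := state T A Q G t
  set Y := costate T A G t
  have hK : X⁻¹ * (A * X + Q * Y) * X⁻¹ = X⁻¹ * (A + Q * (Y * X⁻¹)) := by
    rw [Matrix.mul_assoc, Matrix.add_mul, Matrix.mul_assoc A,
      mul_nonsing_inv _ ((isUnit_iff_isUnit_det _).mp hu), Matrix.mul_one, Matrix.mul_assoc Q]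
  rw [hK, Matrix.mul_neg, ← Matrix.mul_assoc _ X⁻¹, Matrix.neg_mul, Matrix.mul_assoc C,
    neg_add_rev, add_comm]

theorem contDiffOn_R₁ (hQ : Q.PosSemidef) (hG : (-G).PosSemidef) (haT : a < T) :
    ContDiffOn ℝ 1 (R₁ T A Q G C θ) (Icc a T) := by
  have hR₁ : ContinuousOn (R₁ T A Q G C θ) (Iic T) := fun _ ht =>
    (hasDerivAt_R₁ (isUnit_state hQ hG ht)).continuousAt.continuousWithinAt
  refine contDiffOn_one_of_hasDerivWithinAt (uniqueDiffOn_Icc haT)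
    (fun t ht => (hasDerivAt_R₁ (isUnit_state hQ hG ht.2)).hasDerivWithinAt) ?_
  have hsol := continuousOn_solution (T := T) (A := A) hQ hG
  exact ((hR₁.matrix_mul (continuousOn_const.add (continuousOn_const.matrix_mul hsol))).add
    (continuousOn_const.matrix_mul hsol)).neg.mono Icc_subset_Iic_self

theorem R₁_ode (hQ : Q.PosSemidef) (hG : (-G).PosSemidef) (haT : a < T) {t : ℝ}
    (ht : t ∈ Icc a T) :
    derivWithin (R₁ T A Q G C θ) (Icc a T) t + R₁ T A Q G C θ t * (A + Q * solution T A Q G t)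
      + C * solution T A Q G t = 0 := by
  have hd : derivWithin (R₁ T A Q G C θ) (Icc a T) t
      = -(R₁ T A Q G C θ t * (A + Q * solution T A Q G t) + C * solution T A Q G t) :=
    (hasDerivAt_R₁ (isUnit_state hQ hG ht.2)).hasDerivWithinAt.derivWithin
      (uniqueDiffOn_Icc haT t ht)
  rw [hd, add_assoc, neg_add_cancel]

theorem eqOn_R₁ (hQ : Q.PosSemidef) (hG : (-G).PosSemidef) {S : ℝ → Matrix l m ℝ}
    (hS : ContDiffOn ℝ 1 S (Icc a T))
    (hS_ode : ∀ t ∈ Icc a T,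
      derivWithin S (Icc a T) t + S t * (A + Q * solution T A Q G t) + C * solution T A Q G t = 0)
    (hST : S T = θ) : EqOn S (R₁ T A Q G C θ) (Icc a T) := by
  have hS' : ∀ t ∈ Icc a T, HasDerivWithinAt S
      (-(S t * (A + Q * solution T A Q G t) + C * solution T A Q G t)) (Icc a T) t := by
    intro t ht
    rw [← eq_neg_of_add_eq_zero_left ((add_assoc _ _ _).symm.trans (hS_ode t ht))]
    exact (hS.differentiableOn one_ne_zero t ht).hasDerivWithinAt
  intro t ht
  refine sub_eq_zero.mp (eqOn_zero_of_hasDerivWithinAt_mul_right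
    (Z := fun u => S u - R₁ T A Q G C θ u) (K := fun u => -(A + Q * solution T A Q G u))
    ((continuousOn_const.add (continuousOn_const.matrix_mul
      ((continuousOn_solution hQ hG).mono Icc_subset_Iic_self))).neg)
    (fun u hu => ((hS' u hu).sub
      (hasDerivAt_R₁ (isUnit_state hQ hG hu.2)).hasDerivWithinAt).congr_deriv ?_)
    (by simp [hST, R₁_self]) ht)
  simp only [Matrix.sub_mul, Matrix.mul_neg]
  abel

end R₁

end Riccati

theorem statement2_general (n : ℕ) (T : ℝ) (hT : 0 < T)
    (A σ : Matrix (Fin n) (Fin n) ℝ) (B : Matrix (Fin n) (Fin 1) ℝ)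
    (θ : Matrix (Fin 1) (Fin n) ℝ)
    (Θ : Matrix (Fin n) (Fin n) ℝ) (hΘ : (-Θ).PosSemidef) :
    ∃ R₂ : ℝ → Matrix (Fin n) (Fin n) ℝ,
      (ContDiffOn ℝ 1 R₂ (Icc 0 T) ∧
        (∀ t ∈ Icc 0 T,
          derivWithin R₂ (Icc 0 T) t + ((R₂ t)ᵀ + R₂ t) * A
            + (1 / 2 : ℝ) • (((R₂ t)ᵀ + R₂ t) * (σ * σᵀ) * ((R₂ t)ᵀ + R₂ t)) = 0) ∧
        R₂ T = Θ) ∧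
      (∀ S : ℝ → Matrix (Fin n) (Fin n) ℝ,
        (ContDiffOn ℝ 1 S (Icc 0 T) ∧
          (∀ t ∈ Icc 0 T,
            derivWithin S (Icc 0 T) t + ((S t)ᵀ + S t) * A
              + (1 / 2 : ℝ) • (((S t)ᵀ + S t) * (σ * σᵀ) * ((S t)ᵀ + S t)) = 0) ∧
          S T = Θ) → EqOn S R₂ (Icc 0 T)) ∧
      ∃ R₁ : ℝ → Matrix (Fin 1) (Fin n) ℝ,
        (ContDiffOn ℝ 1 R₁ (Icc 0 T) ∧
          (∀ t ∈ Icc 0 T,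
            derivWithin R₁ (Icc 0 T) t
              + R₁ t * (A + (σ * σᵀ) * ((R₂ t)ᵀ + R₂ t))
              + Bᵀ * ((R₂ t)ᵀ + R₂ t) = 0) ∧
          R₁ T = θ) ∧
        (∀ S₁ : ℝ → Matrix (Fin 1) (Fin n) ℝ,
          (ContDiffOn ℝ 1 S₁ (Icc 0 T) ∧
            (∀ t ∈ Icc 0 T,
              derivWithin S₁ (Icc 0 T) t
                + S₁ t * (A + (σ * σᵀ) * ((R₂ t)ᵀ + R₂ t))
                + Bᵀ * ((R₂ t)ᵀ + R₂ t) = 0) ∧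
            S₁ T = θ) → EqOn S₁ R₁ (Icc 0 T)) := by
  have hQ : (σ * σᵀ).PosSemidef := by
    simpa only [conjTranspose_eq_transpose_of_trivial] using posSemidef_self_mul_conjTranspose σ
  have hG := neg_transpose_add_self_posSemidef hΘ
  have hP : ∀ t ∈ Icc 0 T, (Riccati.R₂ T A (σ * σᵀ) Θ t)ᵀ + Riccati.R₂ T A (σ * σᵀ) Θ t
      = Riccati.solution T A (σ * σᵀ) (Θᵀ + Θ) t :=
    fun t ht => Riccati.transpose_R₂_add_R₂ hQ hΘ ht
  refine ⟨Riccati.R₂ T A (σ * σᵀ) Θ,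
    ⟨Riccati.contDiffOn_R₂ hQ hΘ hT, fun t ht => Riccati.R₂_ode hQ hΘ hT ht, Riccati.R₂_self⟩,
    fun S hS => Riccati.eqOn_R₂ hQ hΘ hS.1 hS.2.1 hS.2.2,
    Riccati.R₁ T A (σ * σᵀ) (Θᵀ + Θ) Bᵀ θ,
    ⟨Riccati.contDiffOn_R₁ hQ hG hT, fun t ht => ?_, Riccati.R₁_self⟩,
    fun S₁ hS₁ => Riccati.eqOn_R₁ hQ hG hS₁.1 (fun t ht => ?_) hS₁.2.2⟩
  · rw [hP t ht]
    exact Riccati.R₁_ode hQ hG hT ht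
  · rw [← hP t ht]
    exact hS₁.2.1 t ht

/-- Existence and uniqueness on `[0,T]` of C¹ solutions `R₂ᴳ`, `R₁ᴳ` to the
Riccati-type terminal value problems associated with the futures price in the QPM.
Negative semidefiniteness of `Θ` is expressed as positive semidefiniteness of `-Θ`. -/
theorem statement2 (n : ℕ) (hn : 1 ≤ n) (T : ℝ) (hT : 0 < T)
    (A σ : Matrix (Fin n) (Fin n) ℝ) (B : Matrix (Fin n) (Fin 1) ℝ)
    (θ : Matrix (Fin 1) (Fin n) ℝ)
    (Θ : Matrix (Fin n) (Fin n) ℝ) (hΘ : (-Θ).PosSemidef) :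
    ∃ R₂ : ℝ → Matrix (Fin n) (Fin n) ℝ,
      (ContDiffOn ℝ 1 R₂ (Icc 0 T) ∧
        (∀ t ∈ Icc 0 T,
          derivWithin R₂ (Icc 0 T) t + ((R₂ t)ᵀ + R₂ t) * A
            + (1 / 2 : ℝ) • (((R₂ t)ᵀ + R₂ t) * (σ * σᵀ) * ((R₂ t)ᵀ + R₂ t)) = 0) ∧
        R₂ T = Θ) ∧
      (∀ S : ℝ → Matrix (Fin n) (Fin n) ℝ,
        (ContDiffOn ℝ 1 S (Icc 0 T) ∧
          (∀ t ∈ Icc 0 T,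
            derivWithin S (Icc 0 T) t + ((S t)ᵀ + S t) * A
              + (1 / 2 : ℝ) • (((S t)ᵀ + S t) * (σ * σᵀ) * ((S t)ᵀ + S t)) = 0) ∧
          S T = Θ) → EqOn S R₂ (Icc 0 T)) ∧
      ∃ R₁ : ℝ → Matrix (Fin 1) (Fin n) ℝ,
        (ContDiffOn ℝ 1 R₁ (Icc 0 T) ∧
          (∀ t ∈ Icc 0 T,
            derivWithin R₁ (Icc 0 T) t
              + R₁ t * (A + (σ * σᵀ) * ((R₂ t)ᵀ + R₂ t))
              + Bᵀ * ((R₂ t)ᵀ + R₂ t) = 0) ∧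
          R₁ T = θ) ∧
        (∀ S₁ : ℝ → Matrix (Fin 1) (Fin n) ℝ,
          (ContDiffOn ℝ 1 S₁ (Icc 0 T) ∧
            (∀ t ∈ Icc 0 T,
              derivWithin S₁ (Icc 0 T) t
                + S₁ t * (A + (σ * σᵀ) * ((R₂ t)ᵀ + R₂ t))
                + Bᵀ * ((R₂ t)ᵀ + R₂ t) = 0) ∧
            S₁ T = θ) → EqOn S₁ R₁ (Icc 0 T)) :=
  statement2_general n T hT A σ B θ Θ hΘ
end

section
/- Suppose R₂ : [0,T] → ℝ^{n×n} is a C¹ solution of the nonsymmetric Riccati terminal value problem (NR). Then U(t) := −(1/2)(R₂(t) + R₂(t)ᵀ) solves the symmetric Riccati terminal value problem (SR), and V(t) := −(1/2)(R₂(t) − R₂(t)ᵀ) satisfies V(t) = C̃₁ + ∫_t^T (U(s)A − AᵀU(s) + Q̃) ds for all t ∈ [0,T]. -/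
/-!
Since `σσᵀ` and `P = R₂ + R₂ᵀ` are symmetric, the transpose of (NR) has the same quadratic
term, so the sum of (NR) and its transpose is an equation for `P` alone, which is (SR) for
`U = -P/2`. Their difference shows that the derivative of `V` is an affine function of `U`;
integrating it from `t` to the terminal time `T` gives the formula for `V`.
-/

open Matrix Set

attribute [local instance] Matrix.normedAddCommGroup Matrix.normedSpace

section MatrixCalculus

variable {m n : Type*} [Fintype m] [Fintype n]

noncomputable def Matrix.transposeCLM_s5 : Matrix m n ℝ →L[ℝ] Matrix n m ℝ :=
  LinearMap.toContinuousLinearMap (transposeLinearEquiv m n ℝ ℝ).toLinearMap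

theorem HasDerivWithinAt.matrix_transpose_s5 {f : ℝ → Matrix m n ℝ} {f' : Matrix m n ℝ}
    {s : Set ℝ} {t : ℝ} (hf : HasDerivWithinAt f f' s t) :
    HasDerivWithinAt (fun x => (f x)ᵀ) f'ᵀ s t :=
  (transposeCLM_s5 (m := m) (n := n)).hasFDerivAt.comp_hasDerivWithinAt t hf

theorem ContDiffOn.matrix_transpose_s5 {f : ℝ → Matrix m n ℝ} {s : Set ℝ} {k : WithTop ℕ∞}
    (hf : ContDiffOn ℝ k f s) : ContDiffOn ℝ k (fun x => (f x)ᵀ) s :=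
  (transposeCLM_s5 (m := m) (n := n)).contDiff.comp_contDiffOn hf

end MatrixCalculus

theorem eq_add_integral_of_hasDerivWithinAt_neg {E : Type*} [NormedAddCommGroup E]
    [NormedSpace ℝ E] [CompleteSpace E] {f g : ℝ → E} {a b t : ℝ}
    (hf : ∀ s ∈ Icc a b, HasDerivWithinAt f (-g s) (Icc a b) s) (hg : ContinuousOn g (Icc a b))
    (ht : t ∈ Icc a b) : f t = f b + ∫ s in t..b, g s := by
  have hsub : Icc t b ⊆ Icc a b := Icc_subset_Icc_left ht.1
  have hftc : ∫ s in t..b, -g s = f b - f t := by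
    refine intervalIntegral.integral_eq_sub_of_hasDerivAt_of_le ht.2
      (fun s hs => (hf s (hsub hs)).continuousWithinAt.mono hsub) (fun s hs => ?_)
      ((hg.mono hsub).neg.intervalIntegrable_of_Icc ht.2)
    exact (hf s (hsub (Ioo_subset_Icc_self hs))).hasDerivAt
      (Icc_mem_nhds (ht.1.trans_lt hs.1) hs.2)
  rw [intervalIntegral.integral_neg, neg_eq_iff_eq_neg, neg_sub] at hftc
  rw [hftc]
  abel

section RiccatiAlgebra

variable {m : Type*} [Fintype m] {A S Υ R D U : Matrix m m ℝ}

theorem eq_sub_of_riccati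
    (h : D + (Rᵀ + R) * A + (1 / 2 : ℝ) • ((Rᵀ + R) * S * (Rᵀ + R)) - Υ = 0) :
    D = Υ - (Rᵀ + R) * A - (1 / 2 : ℝ) • ((Rᵀ + R) * S * (Rᵀ + R)) := by
  linear_combination (norm := module) h

theorem riccati_symmPart (hS : S.IsSymm) (hU : U = -((1 / 2 : ℝ) • (R + Rᵀ)))
    (h : D + (Rᵀ + R) * A + (1 / 2 : ℝ) • ((Rᵀ + R) * S * (Rᵀ + R)) - Υ = 0) :
    -((1 / 2 : ℝ) • (D + Dᵀ)) + U * A + Aᵀ * U - (2 : ℝ) • (U * S * U)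
      + (1 / 2 : ℝ) • (Υ + Υᵀ) = 0 := by
  subst hU
  rw [eq_sub_of_riccati h]
  simp only [transpose_add, transpose_sub, transpose_smul, transpose_mul, transpose_transpose,
    hS.eq, mul_add, add_mul, neg_mul, mul_neg, smul_mul_assoc, mul_smul_comm, mul_assoc]
  module

theorem riccati_skewPart (hS : S.IsSymm) (hU : U = -((1 / 2 : ℝ) • (R + Rᵀ)))
    (h : D + (Rᵀ + R) * A + (1 / 2 : ℝ) • ((Rᵀ + R) * S * (Rᵀ + R)) - Υ = 0) :
    -((1 / 2 : ℝ) • (D - Dᵀ)) = -(U * A - Aᵀ * U + (1 / 2 : ℝ) • (Υ - Υᵀ)) := by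
  subst hU
  rw [eq_sub_of_riccati h]
  simp only [transpose_add, transpose_sub, transpose_smul, transpose_mul, transpose_transpose,
    hS.eq, mul_add, add_mul, neg_mul, mul_neg, smul_mul_assoc, mul_smul_comm, mul_assoc]
  module

end RiccatiAlgebra

theorem statement5_general (n : ℕ) (T : ℝ) (hT : 0 < T)
    (A σ Υ Θ : Matrix (Fin n) (Fin n) ℝ)
    (Q Qtilde C₁ Ctilde₁ : Matrix (Fin n) (Fin n) ℝ)
    (hQ : Q = (1 / 2 : ℝ) • (Υ + Υᵀ))
    (hQtilde : Qtilde = (1 / 2 : ℝ) • (Υ - Υᵀ))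
    (hC₁ : C₁ = -((1 / 2 : ℝ) • (Θ + Θᵀ)))
    (hCtilde₁ : Ctilde₁ = -((1 / 2 : ℝ) • (Θ - Θᵀ)))
    (R₂ : ℝ → Matrix (Fin n) (Fin n) ℝ)
    (hR₂smooth : ContDiffOn ℝ 1 R₂ (Icc 0 T))
    (hR₂ode : ∀ t ∈ Icc 0 T,
      derivWithin R₂ (Icc 0 T) t + ((R₂ t)ᵀ + R₂ t) * A
        + (1 / 2 : ℝ) • (((R₂ t)ᵀ + R₂ t) * (σ * σᵀ) * ((R₂ t)ᵀ + R₂ t)) - Υ = 0)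
    (hR₂T : R₂ T = Θ)
    (U V : ℝ → Matrix (Fin n) (Fin n) ℝ)
    (hU : ∀ t, U t = -((1 / 2 : ℝ) • (R₂ t + (R₂ t)ᵀ)))
    (hV : ∀ t, V t = -((1 / 2 : ℝ) • (R₂ t - (R₂ t)ᵀ))) :
    (ContDiffOn ℝ 1 U (Icc 0 T) ∧
      (∀ t ∈ Icc 0 T,
        derivWithin U (Icc 0 T) t + U t * A + Aᵀ * U t
          - (2 : ℝ) • (U t * (σ * σᵀ) * U t) + Q = 0) ∧
      U T = C₁) ∧
    (∀ t ∈ Icc 0 T, V t = Ctilde₁ + ∫ s in t..T, (U s * A - Aᵀ * U s + Qtilde)) := by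
  have hR₂' (t) (ht : t ∈ Icc 0 T) :
      HasDerivWithinAt R₂ (derivWithin R₂ (Icc 0 T) t) (Icc 0 T) t :=
    (hR₂smooth.differentiableOn one_ne_zero t ht).hasDerivWithinAt
  have hUsmooth : ContDiffOn ℝ 1 U (Icc 0 T) := by
    rw [funext hU]
    exact ((hR₂smooth.add hR₂smooth.matrix_transpose_s5).const_smul (1 / 2 : ℝ)).neg
  refine ⟨⟨hUsmooth, fun t ht => ?_, by rw [hU, hR₂T, hC₁]⟩, fun t ht => ?_⟩
  · have hU' : HasDerivWithinAt U (-((1 / 2 : ℝ) •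
        (derivWithin R₂ (Icc 0 T) t + (derivWithin R₂ (Icc 0 T) t)ᵀ))) (Icc 0 T) t := by
      rw [funext hU]
      exact (((hR₂' t ht).add (hR₂' t ht).matrix_transpose_s5).const_smul (1 / 2 : ℝ)).neg
    have hUderiv : derivWithin U (Icc 0 T) t = _ := hU'.derivWithin (uniqueDiffOn_Icc hT t ht)
    rw [hUderiv, hQ]
    exact riccati_symmPart (isSymm_mul_transpose_self σ) (hU t) (hR₂ode t ht)
  · have hV' (s) (hs : s ∈ Icc 0 T) :
        HasDerivWithinAt V (-(U s * A - Aᵀ * U s + Qtilde)) (Icc 0 T) s := by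
      rw [hQtilde, ← riccati_skewPart (isSymm_mul_transpose_self σ) (hU s) (hR₂ode s hs),
        funext hV]
      exact (((hR₂' s hs).sub (hR₂' s hs).matrix_transpose_s5).const_smul (1 / 2 : ℝ)).neg
    have hVT : V T = Ctilde₁ := by rw [hV, hR₂T, hCtilde₁]
    have hUcont := hUsmooth.continuousOn
    rw [← hVT]
    exact eq_add_integral_of_hasDerivWithinAt_neg hV' (by fun_prop) ht

/-- If `R₂` is a C¹ solution of the nonsymmetric Riccati terminal value
problem (NR), then `U(t) = -(1/2)(R₂(t) + R₂(t)ᵀ)` solves the symmetric Riccati terminal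
value problem (SR), and `V(t) = -(1/2)(R₂(t) - R₂(t)ᵀ)` satisfies
`V(t) = C̃₁ + ∫_t^T (U(s)A - AᵀU(s) + Q̃) ds` on `[0,T]`. -/
theorem statement5 (n : ℕ) (hn : 1 ≤ n) (T : ℝ) (hT : 0 < T)
    (A σ Υ Θ : Matrix (Fin n) (Fin n) ℝ)
    (Q Qtilde C₁ Ctilde₁ : Matrix (Fin n) (Fin n) ℝ)
    (hQ : Q = (1 / 2 : ℝ) • (Υ + Υᵀ))
    (hQtilde : Qtilde = (1 / 2 : ℝ) • (Υ - Υᵀ))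
    (hC₁ : C₁ = -((1 / 2 : ℝ) • (Θ + Θᵀ)))
    (hCtilde₁ : Ctilde₁ = -((1 / 2 : ℝ) • (Θ - Θᵀ)))
    (R₂ : ℝ → Matrix (Fin n) (Fin n) ℝ)
    (hR₂smooth : ContDiffOn ℝ 1 R₂ (Icc 0 T))
    (hR₂ode : ∀ t ∈ Icc 0 T,
      derivWithin R₂ (Icc 0 T) t + ((R₂ t)ᵀ + R₂ t) * A
        + (1 / 2 : ℝ) • (((R₂ t)ᵀ + R₂ t) * (σ * σᵀ) * ((R₂ t)ᵀ + R₂ t)) - Υ = 0)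
    (hR₂T : R₂ T = Θ)
    (U V : ℝ → Matrix (Fin n) (Fin n) ℝ)
    (hU : ∀ t, U t = -((1 / 2 : ℝ) • (R₂ t + (R₂ t)ᵀ)))
    (hV : ∀ t, V t = -((1 / 2 : ℝ) • (R₂ t - (R₂ t)ᵀ))) :
    (ContDiffOn ℝ 1 U (Icc 0 T) ∧
      (∀ t ∈ Icc 0 T,
        derivWithin U (Icc 0 T) t + U t * A + Aᵀ * U t
          - (2 : ℝ) • (U t * (σ * σᵀ) * U t) + Q = 0) ∧
      U T = C₁) ∧
    (∀ t ∈ Icc 0 T, V t = Ctilde₁ + ∫ s in t..T, (U s * A - Aᵀ * U s + Qtilde)) :=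
  statement5_general n T hT A σ Υ Θ Q Qtilde C₁ Ctilde₁ hQ hQtilde hC₁ hCtilde₁ R₂ hR₂smooth hR₂ode
    hR₂T U V hU hV
end

section
/- Suppose R₂ : [0,T] → ℝ^{n×n} is C¹ with R₂'(t) + (R₂(t)ᵀ + R₂(t))A − Γ + (1/2)(R₂(t) + R₂(t)ᵀ)σσᵀ(R₂(t) + R₂(t)ᵀ) = 0 and R₂(T) = 0; R₁ : [0,T] → ℝ^{1×n} is C¹ with R₁'(t) + R₁(t)A + Bᵀ(R₂(t) + R₂(t)ᵀ) − R + R₁(t)σσᵀ(R₂(t) + R₂(t)ᵀ) = 0 and R₁(T) = 0; and R₀(t) = −∫_t^T (k − R₁(s)B − (1/2)R₁(s)σσᵀR₁(s)ᵀ − tr(σᵀR₂(s)σ)) ds. Then the function f(t,x) := exp(xᵀR₂(t)x + R₁(t)x + R₀(t)) satisfies, for all (t,x) ∈ [0,T] × ℝⁿ, ∂f/∂t(t,x) + (Ax + B)·∇ₓf(t,x) + (1/2)Σ_{i,j=1}^n (σσᵀ)_{ij} ∂²f/∂xᵢ∂xⱼ(t,x) = (xᵀΓx + Rx + k) f(t,x),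 together with the terminal condition f(T,x) = 1 for all x ∈ ℝⁿ. -/
open Matrix Set

attribute [local instance] Matrix.normedAddCommGroup Matrix.normedSpace

/-- Partial derivative of `g : ℝⁿ → ℝ` in the `i`-th coordinate at `x`. -/
noncomputable def pd {n : ℕ} (i : Fin n) (g : (Fin n → ℝ) → ℝ) (x : Fin n → ℝ) : ℝ :=
  deriv (fun s => g (Function.update x i s)) (x i)

/-!
Write `f(t, ·) = exp ∘ U(t, ·)` with `U(t, x) = xᵀR₂x + R₁x + R₀` quadratic in `x`. With
`M = R₂ + R₂ᵀ` and `g = Mx + R₁ᵀ` one has `∂ᵢf = f gᵢ`, `∂ᵢ∂ⱼf = f (gᵢgⱼ + Mᵢⱼ)` and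
`∂ₜf = f ∂ₜU`, so after dividing by `f` the equation becomes a polynomial identity in `x`. Its
quadratic, linear and constant parts are the Riccati equation for `R₂`, the equation for `R₁`, and
`R₀' = k - R₁B - ½R₁σσᵀR₁ᵀ - tr(σᵀR₂σ)` (fundamental theorem of calculus), the trace coming from
`Σᵢⱼ (σσᵀ)ᵢⱼ Mᵢⱼ = 2 tr(σᵀR₂σ)`.
-/

section CurveCalculus

variable {𝕜 ι m : Type*} [NontriviallyNormedField 𝕜] [Fintype ι] {S : Set 𝕜} {t : 𝕜}

theorem HasDerivWithinAt.dotProduct {u w : 𝕜 → ι → 𝕜} {u' w' : ι → 𝕜}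
    (hu : HasDerivWithinAt u u' S t) (hw : HasDerivWithinAt w w' S t) :
    HasDerivWithinAt (fun τ => u τ ⬝ᵥ w τ) (u' ⬝ᵥ w t + u t ⬝ᵥ w') S t := by
  simp only [_root_.dotProduct, ← Finset.sum_add_distrib]
  exact .fun_sum fun i _ => (hasDerivWithinAt_pi.1 hu i).mul (hasDerivWithinAt_pi.1 hw i)

theorem HasDerivWithinAt.mulVec {M : 𝕜 → Matrix m ι 𝕜} {u : 𝕜 → ι → 𝕜} {M' : Matrix m ι 𝕜}
    {u' : ι → 𝕜} (hM : HasDerivWithinAt M M' S t) (hu : HasDerivWithinAt u u' S t) :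
    HasDerivWithinAt (fun τ => M τ *ᵥ u τ) (M' *ᵥ u t + M t *ᵥ u') S t :=
  hasDerivWithinAt_pi.2 fun i => (hasDerivWithinAt_pi.1 hM i).dotProduct hu

end CurveCalculus

theorem hasDerivWithinAt_intervalIntegral_left_of_continuousOn {E : Type*} [NormedAddCommGroup E]
    [NormedSpace ℝ E] [CompleteSpace E] {φ : ℝ → E} {a b t : ℝ} (hφ : ContinuousOn φ (Icc a b))
    (ht : t ∈ Icc a b) :
    HasDerivWithinAt (fun u => ∫ s in u..b, φ s) (-φ t) (Icc a b) t := by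
  have : Fact (t ∈ Icc a b) := ⟨ht⟩
  exact intervalIntegral.integral_hasDerivWithinAt_left
    ((hφ.mono (Icc_subset_Icc_left ht.1)).intervalIntegrable_of_Icc ht.2)
    (hφ.stronglyMeasurableAtFilter_nhdsWithin measurableSet_Icc t) (hφ t ht)

noncomputable def expQuadratic {ι : Type*} [Fintype ι] (P : Matrix ι ι ℝ) (q : ι → ℝ) (c : ℝ)
    (x : ι → ℝ) : ℝ :=
  Real.exp (x ⬝ᵥ P *ᵥ x + q ⬝ᵥ x + c)

theorem HasDerivWithinAt.expQuadratic {ι : Type*} [Fintype ι] {S : Set ℝ} {t : ℝ}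
    {P : ℝ → Matrix ι ι ℝ} {q : ℝ → ι → ℝ} {c : ℝ → ℝ} {P' : Matrix ι ι ℝ} {q' : ι → ℝ} {c' : ℝ}
    (hP : HasDerivWithinAt P P' S t) (hq : HasDerivWithinAt q q' S t)
    (hc : HasDerivWithinAt c c' S t) (x : ι → ℝ) :
    HasDerivWithinAt (fun τ => expQuadratic (P τ) (q τ) (c τ) x)
      (expQuadratic (P t) (q t) (c t) x * (x ⬝ᵥ P' *ᵥ x + q' ⬝ᵥ x + c')) S t := by
  have hx := hasDerivWithinAt_const t S x
  refine (((hx.dotProduct (hP.mulVec hx)).fun_add (hq.dotProduct hx)).fun_add hc).exp.congr_deriv ?_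
  simp only [zero_dotProduct, mulVec_zero, add_zero, zero_add, dotProduct_zero]
  rfl

section Spatial

variable {n : ℕ} (P : Matrix (Fin n) (Fin n) ℝ) (q : Fin n → ℝ) (c : ℝ) (x : Fin n → ℝ)

theorem hasDerivAt_expQuadratic_update (i : Fin n) :
    HasDerivAt (fun s => expQuadratic P q c (Function.update x i s))
      (expQuadratic P q c x * ((P + Pᵀ) *ᵥ x + q) i) (x i) := by
  have hu : HasDerivWithinAt (Function.update x i) (Pi.single i 1) univ (x i) :=
    (hasDerivAt_update x i (x i)).hasDerivWithinAt
  have hP := hasDerivWithinAt_const (x i) univ P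
  have hq := hasDerivWithinAt_const (x i) univ q
  rw [← hasDerivWithinAt_univ]
  refine (((hu.dotProduct (hP.mulVec hu)).fun_add (hq.dotProduct hu)).add_const c).exp.congr_deriv
    ?_
  simp only [Function.update_eq_self, single_dotProduct, dotProduct_single, mulVec_single_one,
    zero_mulVec, zero_dotProduct, zero_add, one_mul, mul_one, Pi.add_apply, add_mulVec]
  rw [dotProduct_comm x (P.col i)]
  rfl

theorem pd_expQuadratic (i : Fin n) :
    pd i (expQuadratic P q c) x = expQuadratic P q c x * ((P + Pᵀ) *ᵥ x + q) i :=
  (hasDerivAt_expQuadratic_update P q c x i).deriv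

theorem pd_pd_expQuadratic (i j : Fin n) :
    pd i (pd j (expQuadratic P q c)) x = expQuadratic P q c x *
      (((P + Pᵀ) *ᵥ x + q) i * ((P + Pᵀ) *ᵥ x + q) j + (P + Pᵀ) j i) := by
  have hu : HasDerivWithinAt (Function.update x i) (Pi.single i 1) univ (x i) :=
    (hasDerivAt_update x i (x i)).hasDerivWithinAt
  have hg := hasDerivWithinAt_pi.1
    (((hasDerivWithinAt_const (x i) univ (P + Pᵀ)).mulVec hu).add_const q) j
  rw [hasDerivWithinAt_univ] at hg
  have hpd : pd j (expQuadratic P q c) = fun y => expQuadratic P q c y * ((P + Pᵀ) *ᵥ y + q) j :=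
    funext fun y => pd_expQuadratic P q c y j
  rw [hpd, pd, ((hasDerivAt_expQuadratic_update P q c x i).fun_mul hg).deriv]
  simp only [Pi.add_apply, Function.update_eq_self, zero_mulVec, mulVec_single,
    MulOpposite.op_one, one_smul, Pi.zero_apply, col_apply, zero_add]
  ring

theorem sum_mul_pd_expQuadratic (a : Fin n → ℝ) :
    ∑ i, a i * pd i (expQuadratic P q c) x =
      expQuadratic P q c x * (a ⬝ᵥ ((P + Pᵀ) *ᵥ x + q)) := by
  simp only [pd_expQuadratic, dotProduct, Finset.mul_sum]
  exact Finset.sum_congr rfl fun i _ => by ring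

theorem sum_sum_mul_pd_pd_expQuadratic (S : Matrix (Fin n) (Fin n) ℝ) :
    ∑ i, ∑ j, S i j * pd i (pd j (expQuadratic P q c)) x =
      expQuadratic P q c x * (((P + Pᵀ) *ᵥ x + q) ⬝ᵥ S *ᵥ ((P + Pᵀ) *ᵥ x + q)
        + trace (S * (P + Pᵀ))) := by
  simp only [pd_pd_expQuadratic, dotProduct, mulVec, trace, diag, mul_apply, mul_add,
    Finset.mul_sum, ← Finset.sum_add_distrib]
  exact Finset.sum_congr rfl fun i _ => Finset.sum_congr rfl fun j _ => by ring

end Spatial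

theorem Matrix.IsSymm.dotProduct_mulVec_comm {n α : Type*} [Fintype n] [CommSemiring α]
    {M : Matrix n n α} (hM : M.IsSymm) (v w : n → α) : v ⬝ᵥ M *ᵥ w = w ⬝ᵥ M *ᵥ v := by
  rw [dotProduct_mulVec, ← mulVec_transpose, hM, dotProduct_comm]

theorem trace_mul_transpose_mul_add_transpose {n α : Type*} [Fintype n] [CommSemiring α]
    (σ P : Matrix n n α) :
    trace (σ * σᵀ * (P + Pᵀ)) = 2 * trace (σᵀ * P * σ) := by
  have h : trace (σ * σᵀ * P) = trace (σᵀ * P * σ) := by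
    rw [Matrix.mul_assoc, trace_mul_comm, Matrix.mul_assoc]
  rw [Matrix.mul_add, trace_add, ← trace_transpose (σ * σᵀ * Pᵀ)]
  simp only [transpose_mul, transpose_transpose, ← Matrix.mul_assoc]
  rw [trace_mul_cycle P, h]
  ring

/-- The equation of the theorem divided by `f`: the Riccati equations for `P = R₂` and `Q = R₁`
cancel its quadratic and linear parts in `x`. -/
theorem riccati_identity {n : ℕ} (A σ Γ P P' : Matrix (Fin n) (Fin n) ℝ)
    (Q Q' R : Matrix (Fin 1) (Fin n) ℝ) (B : Matrix (Fin n) (Fin 1) ℝ) (k : ℝ)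
    (hP : P' + (Pᵀ + P) * A - Γ + (1 / 2 : ℝ) • ((P + Pᵀ) * (σ * σᵀ) * (P + Pᵀ)) = 0)
    (hQ : Q' + Q * A + Bᵀ * (P + Pᵀ) - R + Q * (σ * σᵀ) * (P + Pᵀ) = 0) (x : Fin n → ℝ) :
    x ⬝ᵥ P' *ᵥ x + Q' 0 ⬝ᵥ x
        + (k - (Q * B) 0 0 - (1 / 2) * (Q * (σ * σᵀ) * Qᵀ) 0 0 - trace (σᵀ * P * σ))
      + (A *ᵥ x + fun i => B i 0) ⬝ᵥ ((P + Pᵀ) *ᵥ x + Q 0)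
      + (1 / 2) * (((P + Pᵀ) *ᵥ x + Q 0) ⬝ᵥ (σ * σᵀ) *ᵥ ((P + Pᵀ) *ᵥ x + Q 0)
        + trace (σ * σᵀ * (P + Pᵀ)))
    = x ⬝ᵥ Γ *ᵥ x + (R *ᵥ x) 0 + k := by
  set S := σ * σᵀ
  set M := P + Pᵀ
  set b : Fin n → ℝ := fun i => B i 0
  have hS : S.IsSymm := isSymm_mul_transpose_self σ
  have hM : M.IsSymm := isSymm_add_transpose_self P
  have hquad : x ⬝ᵥ P' *ᵥ x = x ⬝ᵥ Γ *ᵥ x - (A *ᵥ x) ⬝ᵥ M *ᵥ x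
      - (1 / 2) * ((M *ᵥ x) ⬝ᵥ S *ᵥ (M *ᵥ x)) := by
    have hP' : P' = Γ - M * A - (1 / 2 : ℝ) • (M * S * M) := by
      rw [← sub_eq_zero, ← hP, add_comm Pᵀ]
      abel
    simp only [hP', sub_mulVec, smul_mulVec, ← mulVec_mulVec, dotProduct_sub, dotProduct_smul,
      smul_eq_mul, hM.dotProduct_mulVec_comm x, dotProduct_comm (S *ᵥ M *ᵥ x)]
  have hlin : Q' 0 ⬝ᵥ x = R 0 ⬝ᵥ x - Q 0 ⬝ᵥ A *ᵥ x - b ⬝ᵥ M *ᵥ x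
      - Q 0 ⬝ᵥ S *ᵥ (M *ᵥ x) := by
    have h := congrArg (fun N => (N *ᵥ x) 0) hQ
    simp only [add_mulVec, sub_mulVec, ← mulVec_mulVec, Pi.add_apply, Pi.sub_apply,
      zero_mulVec, Pi.zero_apply] at h
    change Q' 0 ⬝ᵥ x + Q 0 ⬝ᵥ A *ᵥ x + b ⬝ᵥ M *ᵥ x - R 0 ⬝ᵥ x + Q 0 ⬝ᵥ S *ᵥ (M *ᵥ x) = 0 at h
    linarith
  have hQB : (Q * B) 0 0 = Q 0 ⬝ᵥ b := rfl
  have hQSQ : (Q * S * Qᵀ) 0 0 = Q 0 ⬝ᵥ S *ᵥ Q 0 := by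
    rw [dotProduct_mulVec]
    rfl
  have hR : (R *ᵥ x) 0 = R 0 ⬝ᵥ x := rfl
  have htr : trace (S * M) = 2 * trace (σᵀ * P * σ) := trace_mul_transpose_mul_add_transpose σ P
  simp only [dotProduct_add, add_dotProduct, mulVec_add, hQB, hQSQ, hR, htr,
    hS.dotProduct_mulVec_comm (M *ᵥ x), dotProduct_comm (A *ᵥ x) (Q 0), dotProduct_comm b (Q 0)]
  linear_combination hquad + hlin

theorem continuousOn_riccati_integrand {n : ℕ} {I : Set ℝ} (σ : Matrix (Fin n) (Fin n) ℝ)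
    (B : Matrix (Fin n) (Fin 1) ℝ) (k : ℝ) {R₂ : ℝ → Matrix (Fin n) (Fin n) ℝ}
    {R₁ : ℝ → Matrix (Fin 1) (Fin n) ℝ} (hR₂ : ContinuousOn R₂ I) (hR₁ : ContinuousOn R₁ I) :
    ContinuousOn (fun s => k - (R₁ s * B) 0 0 - (1 / 2) * (R₁ s * (σ * σᵀ) * (R₁ s)ᵀ) 0 0
      - trace (σᵀ * R₂ s * σ)) I := by
  have hfst : Continuous fun p : Matrix (Fin 1) (Fin n) ℝ × Matrix (Fin n) (Fin n) ℝ => p.1 :=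
    continuous_fst
  have hsnd : Continuous fun p : Matrix (Fin 1) (Fin n) ℝ × Matrix (Fin n) (Fin n) ℝ => p.2 :=
    continuous_snd
  have hΦ : Continuous fun p : Matrix (Fin 1) (Fin n) ℝ × Matrix (Fin n) (Fin n) ℝ =>
      k - (p.1 * B) 0 0 - (1 / 2) * (p.1 * (σ * σᵀ) * p.1ᵀ) 0 0 - trace (σᵀ * p.2 * σ) :=
    ((continuous_const.sub ((hfst.matrix_mul continuous_const).matrix_elem 0 0)).sub
      (continuous_const.mul (((hfst.matrix_mul continuous_const).matrix_mul
        hfst.matrix_transpose).matrix_elem 0 0))).sub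
      ((continuous_const.matrix_mul hsnd).matrix_mul continuous_const).matrix_trace
  exact (hΦ.comp_continuousOn (hR₁.prodMk hR₂) :)

theorem statement11_general (n : ℕ) (T : ℝ) (hT : 0 < T)
    (A σ : Matrix (Fin n) (Fin n) ℝ) (B : Matrix (Fin n) (Fin 1) ℝ)
    (Γ : Matrix (Fin n) (Fin n) ℝ)
    (R : Matrix (Fin 1) (Fin n) ℝ) (k : ℝ)
    (R₂ : ℝ → Matrix (Fin n) (Fin n) ℝ)
    (hR₂smooth : ContDiffOn ℝ 1 R₂ (Icc 0 T))
    (hR₂ode : ∀ t ∈ Icc 0 T,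
      derivWithin R₂ (Icc 0 T) t + ((R₂ t)ᵀ + R₂ t) * A - Γ
        + (1 / 2 : ℝ) • ((R₂ t + (R₂ t)ᵀ) * (σ * σᵀ) * (R₂ t + (R₂ t)ᵀ)) = 0)
    (hR₂T : R₂ T = 0)
    (R₁ : ℝ → Matrix (Fin 1) (Fin n) ℝ)
    (hR₁smooth : ContDiffOn ℝ 1 R₁ (Icc 0 T))
    (hR₁ode : ∀ t ∈ Icc 0 T,
      derivWithin R₁ (Icc 0 T) t + R₁ t * A + Bᵀ * (R₂ t + (R₂ t)ᵀ) - R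
        + R₁ t * (σ * σᵀ) * (R₂ t + (R₂ t)ᵀ) = 0)
    (hR₁T : R₁ T = 0)
    (R₀ : ℝ → ℝ)
    (hR₀ : ∀ t, R₀ t = -∫ s in t..T,
      (k - (R₁ s * B) 0 0 - (1 / 2) * (R₁ s * (σ * σᵀ) * (R₁ s)ᵀ) 0 0
        - Matrix.trace (σᵀ * R₂ s * σ)))
    (f : ℝ → (Fin n → ℝ) → ℝ)
    (hf : ∀ t x, f t x =
      Real.exp (x ⬝ᵥ (R₂ t).mulVec x + (R₁ t).mulVec x 0 + R₀ t)) :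
    (∀ t ∈ Icc 0 T, ∀ x : Fin n → ℝ,
      derivWithin (fun τ => f τ x) (Icc 0 T) t
        + (∑ i, (A.mulVec x i + B i 0) * pd i (f t) x)
        + (1 / 2) * ∑ i, ∑ j, (σ * σᵀ) i j * pd i (pd j (f t)) x
      = (x ⬝ᵥ Γ.mulVec x + R.mulVec x 0 + k) * f t x) ∧
    (∀ x : Fin n → ℝ, f T x = 1) := by
  have hf' : ∀ τ, f τ = expQuadratic (R₂ τ) (R₁ τ 0) (R₀ τ) := fun τ => funext (hf τ)
  refine ⟨fun t ht x => ?_, fun x => by simp [hf, hR₂T, hR₁T, hR₀]⟩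
  -- The ascriptions make `derivWithin` use the same `Matrix` module instances as `hR₂ode`, `hR₁ode`.
  have hR₂' : HasDerivWithinAt R₂ (derivWithin R₂ (Icc 0 T) t) (Icc 0 T) t :=
    (hR₂smooth.differentiableOn one_ne_zero t ht).hasDerivWithinAt
  have hR₁' : HasDerivWithinAt R₁ (derivWithin R₁ (Icc 0 T) t) (Icc 0 T) t :=
    (hR₁smooth.differentiableOn one_ne_zero t ht).hasDerivWithinAt
  have hR₀' := ((hasDerivWithinAt_intervalIntegral_left_of_continuousOn
    (continuousOn_riccati_integrand σ B k hR₂smooth.continuousOn hR₁smooth.continuousOn)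
    ht).fun_neg).congr_of_mem (fun u _ => hR₀ u) ht
  simp only [hf']
  rw [(hR₂'.expQuadratic (hasDerivWithinAt_pi.1 hR₁' 0) hR₀' x).derivWithin
    (uniqueDiffOn_Icc hT t ht)]
  simp only [sum_mul_pd_expQuadratic, sum_sum_mul_pd_pd_expQuadratic]
  linear_combination expQuadratic (R₂ t) (R₁ t 0) (R₀ t) x *
    riccati_identity A σ Γ (R₂ t) _ (R₁ t) _ R B k (hR₂ode t ht) (hR₁ode t ht) x

/-- With `R₂`, `R₁` solving the bond Riccati equations and `R₀` its integral,
the function `f(t,x) = exp(xᵀR₂(t)x + R₁(t)x + R₀(t))` solves the term-structure PDE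
`∂f/∂t + (Ax+B)·∇ₓf + (1/2)Σ (σσᵀ)ᵢⱼ ∂²f/∂xᵢ∂xⱼ = (xᵀΓx + Rx + k) f` with `f(T,·) = 1`. -/
theorem statement11 (n : ℕ) (hn : 1 ≤ n) (T : ℝ) (hT : 0 < T)
    (A σ : Matrix (Fin n) (Fin n) ℝ) (B : Matrix (Fin n) (Fin 1) ℝ)
    (Γ : Matrix (Fin n) (Fin n) ℝ) (hΓ : Γ.PosSemidef)
    (R : Matrix (Fin 1) (Fin n) ℝ) (k : ℝ)
    (R₂ : ℝ → Matrix (Fin n) (Fin n) ℝ)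
    (hR₂smooth : ContDiffOn ℝ 1 R₂ (Icc 0 T))
    (hR₂ode : ∀ t ∈ Icc 0 T,
      derivWithin R₂ (Icc 0 T) t + ((R₂ t)ᵀ + R₂ t) * A - Γ
        + (1 / 2 : ℝ) • ((R₂ t + (R₂ t)ᵀ) * (σ * σᵀ) * (R₂ t + (R₂ t)ᵀ)) = 0)
    (hR₂T : R₂ T = 0)
    (R₁ : ℝ → Matrix (Fin 1) (Fin n) ℝ)
    (hR₁smooth : ContDiffOn ℝ 1 R₁ (Icc 0 T))
    (hR₁ode : ∀ t ∈ Icc 0 T,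
      derivWithin R₁ (Icc 0 T) t + R₁ t * A + Bᵀ * (R₂ t + (R₂ t)ᵀ) - R
        + R₁ t * (σ * σᵀ) * (R₂ t + (R₂ t)ᵀ) = 0)
    (hR₁T : R₁ T = 0)
    (R₀ : ℝ → ℝ)
    (hR₀ : ∀ t, R₀ t = -∫ s in t..T,
      (k - (R₁ s * B) 0 0 - (1 / 2) * (R₁ s * (σ * σᵀ) * (R₁ s)ᵀ) 0 0
        - Matrix.trace (σᵀ * R₂ s * σ)))
    (f : ℝ → (Fin n → ℝ) → ℝ)
    (hf : ∀ t x, f t x =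
      Real.exp (x ⬝ᵥ (R₂ t).mulVec x + (R₁ t).mulVec x 0 + R₀ t)) :
    (∀ t ∈ Icc 0 T, ∀ x : Fin n → ℝ,
      derivWithin (fun τ => f τ x) (Icc 0 T) t
        + (∑ i, (A.mulVec x i + B i 0) * pd i (f t) x)
        + (1 / 2) * ∑ i, ∑ j, (σ * σᵀ) i j * pd i (pd j (f t)) x
      = (x ⬝ᵥ Γ.mulVec x + R.mulVec x 0 + k) * f t x) ∧
    (∀ x : Fin n → ℝ, f T x = 1) :=
  statement11_general n T hT A σ B Γ R k R₂ hR₂smooth hR₂ode hR₂T R₁ hR₁smooth hR₁ode hR₁T R₀ hR₀ f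
    hf
end

section
/- Suppose R₂ᴳ : [0,T] → ℝ^{n×n} is C¹ with R₂ᴳ'(t) + (R₂ᴳ(t)ᵀ + R₂ᴳ(t))A + (1/2)(R₂ᴳ(t)ᵀ + R₂ᴳ(t))σσᵀ(R₂ᴳ(t)ᵀ + R₂ᴳ(t)) = 0 and R₂ᴳ(T) = Θ; R₁ᴳ : [0,T] → ℝ^{1×n} is C¹ with R₁ᴳ'(t) + R₁ᴳ(t)(A + σσᵀ(R₂ᴳ(t)ᵀ + R₂ᴳ(t))) + Bᵀ(R₂ᴳ(t)ᵀ + R₂ᴳ(t)) = 0 and R₁ᴳ(T) = θ; and R₀ᴳ(t) = γ + ∫_t^T (R₁ᴳ(s)B + (1/2)R₁ᴳ(s)σσᵀR₁ᴳ(s)ᵀ + tr(σᵀR₂ᴳ(s)σ)) ds. Then the function g(t,x) := exp(xᵀR₂ᴳ(t)x + R₁ᴳ(t)x + R₀ᴳ(t)) satisfies, for all (t,x) ∈ [0,T] × ℝⁿ, ∂g/∂t(t,x) + (Ax + B)·∇ₓg(t,x) + (1/2)Σ_{i,j=1}^n (σσᵀ)_{ij} ∂²g/∂xᵢ∂xⱼ(t,x)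 = 0, together with the terminal condition g(T,x) = exp(xᵀΘx + θx + γ) for all x ∈ ℝⁿ. -/
open Matrix Set

attribute [local instance] Matrix.normedAddCommGroup Matrix.normedSpace

/-! Since `g t` is the exponential of a quadratic polynomial in `x`, every derivative in the
equation is `g` times a polynomial: `∂ₜg = g (xᵀṘ₂x + Ṙ₁x + Ṙ₀)`, `∂ᵢg = g ψᵢ` and
`∂ᵢ∂ⱼg = g (ψᵢψⱼ + Sⱼᵢ)`, where `S = R₂ᵀ + R₂` and `ψ = Sx + R₁ᵀ`. The equation thus reduces to
the vanishing of a polynomial in `x`; its quadratic part vanishes by the Riccati equation for `R₂`,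
its linear part by the equation for `R₁`, and its constant part by the definition of `R₀`, using
`tr (σᵀR₂σ) = ½ tr (σσᵀS)`. -/

open Real

section Calculus

variable {𝕜 : Type*} [NontriviallyNormedField 𝕜]

theorem HasDerivAt.dotProduct {ι : Type*} [Fintype ι] {u v : 𝕜 → ι → 𝕜} {u' v' : ι → 𝕜} {s : 𝕜}
    (hu : HasDerivAt u u' s) (hv : HasDerivAt v v' s) :
    HasDerivAt (fun s => u s ⬝ᵥ v s) (u' ⬝ᵥ v s + u s ⬝ᵥ v') s := by
  unfold _root_.dotProduct
  rw [← Finset.sum_add_distrib]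
  exact HasDerivAt.fun_sum fun i _ => (hasDerivAt_pi.1 hu i).mul (hasDerivAt_pi.1 hv i)

theorem HasDerivAt.mulVec [CompleteSpace 𝕜] {ι κ : Type*} [Fintype ι] [Fintype κ] (M : Matrix ι κ 𝕜)
    {v : 𝕜 → κ → 𝕜} {v' : κ → 𝕜} {s : 𝕜} (hv : HasDerivAt v v' s) :
    HasDerivAt (fun s => M *ᵥ v s) (M *ᵥ v') s :=
  (mulVecLin M).toContinuousLinearMap.hasFDerivAt.comp_hasDerivAt s hv

theorem HasDerivWithinAt.dotProduct_mulVec [CompleteSpace 𝕜] {ι κ : Type*} [Fintype ι] [Fintype κ]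
    {R : 𝕜 → Matrix ι κ 𝕜} {R' : Matrix ι κ 𝕜} {s : Set 𝕜} {t : 𝕜}
    (h : HasDerivWithinAt R R' s t) (u : ι → 𝕜) (v : κ → 𝕜) :
    HasDerivWithinAt (fun τ => u ⬝ᵥ R τ *ᵥ v) (u ⬝ᵥ R' *ᵥ v) s t :=
  let L : Matrix ι κ 𝕜 →ₗ[𝕜] 𝕜 :=
    { toFun := fun M => u ⬝ᵥ M *ᵥ v
      map_add' := fun M N => by simp [add_mulVec, dotProduct_add]
      map_smul' := fun c M => by simp [smul_mulVec, dotProduct_smul] }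
  L.toContinuousLinearMap.hasFDerivAt.comp_hasDerivWithinAt t h

theorem hasDerivAt_quadratic_update [CompleteSpace 𝕜] {ι : Type*} [Fintype ι] [DecidableEq ι]
    (M : Matrix ι ι 𝕜) (r x : ι → 𝕜) (c : 𝕜) (i : ι) :
    HasDerivAt (fun s => Function.update x i s ⬝ᵥ M *ᵥ Function.update x i s
      + r ⬝ᵥ Function.update x i s + c) (((Mᵀ + M) *ᵥ x + r) i) (x i) := by
  have hu := hasDerivAt_update x i (x i)
  refine (((hu.dotProduct (hu.mulVec M)).add
    ((hasDerivAt_const _ r).dotProduct hu)).add_const c).congr_deriv ?_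
  simp only [Function.update_eq_self, mulVec_single_one, dotProduct_single_one, zero_dotProduct,
    single_one_dotProduct, add_mulVec, Pi.add_apply, zero_add]
  rw [add_comm ((Mᵀ *ᵥ x) i), dotProduct_comm]
  rfl

end Calculus

theorem hasDerivWithinAt_intervalIntegral_Icc_left {E : Type*} [NormedAddCommGroup E]
    [NormedSpace ℝ E] [CompleteSpace E] {f : ℝ → E} {a b t : ℝ}
    (hf : ContinuousOn f (Icc a b)) (ht : t ∈ Icc a b) :
    HasDerivWithinAt (fun u => ∫ s in u..b, f s) (-f t) (Icc a b) t := by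
  have : Fact (t ∈ Icc a b) := ⟨ht⟩
  exact intervalIntegral.integral_hasDerivWithinAt_left
    (hf.mono (uIcc_subset_Icc ht (right_mem_Icc.2 (ht.1.trans ht.2)))).intervalIntegrable
    (hf.stronglyMeasurableAtFilter_nhdsWithin measurableSet_Icc t) (hf t ht)

theorem Matrix.IsSymm.dotProduct_mulVec_comm_s12 {ι R : Type*} [Fintype ι] [CommSemiring R]
    {S : Matrix ι ι R} (hS : S.IsSymm) (v w : ι → R) : v ⬝ᵥ S *ᵥ w = w ⬝ᵥ S *ᵥ v := by
  rw [dotProduct_mulVec, ← mulVec_transpose, hS, dotProduct_comm]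

theorem trace_transpose_mul_mul_eq_half_trace_mul_transpose_add_self {ι K : Type*} [Fintype ι]
    [Field K] [CharZero K] (σ M : Matrix ι ι K) :
    trace (σᵀ * M * σ) = (1 / 2) * trace (σ * σᵀ * (Mᵀ + M)) := by
  have hMt : trace (σ * σᵀ * Mᵀ) = trace (σ * σᵀ * M) := by
    rw [← trace_transpose, transpose_mul, transpose_mul, transpose_transpose, transpose_transpose,
      trace_mul_comm]
  have hcycle : trace (σᵀ * M * σ) = trace (σ * σᵀ * M) := trace_mul_cycle _ _ _
  rw [Matrix.mul_add, trace_add, hMt, hcycle]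
  ring

section QuadraticExponential

variable {n : ℕ} (M : Matrix (Fin n) (Fin n) ℝ) (r x : Fin n → ℝ) (c : ℝ)

theorem pd_exp_quadratic (j : Fin n) :
    pd j (fun y => exp (y ⬝ᵥ M *ᵥ y + r ⬝ᵥ y + c)) x
      = exp (x ⬝ᵥ M *ᵥ x + r ⬝ᵥ x + c) * ((Mᵀ + M) *ᵥ x + r) j := by
  simpa [pd, Function.update_eq_self] using (hasDerivAt_quadratic_update M r x c j).exp.deriv

theorem pd_pd_exp_quadratic (i j : Fin n) :
    pd i (pd j (fun y => exp (y ⬝ᵥ M *ᵥ y + r ⬝ᵥ y + c))) x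
      = exp (x ⬝ᵥ M *ᵥ x + r ⬝ᵥ x + c)
        * (((Mᵀ + M) *ᵥ x + r) i * ((Mᵀ + M) *ᵥ x + r) j + (Mᵀ + M) j i) := by
  have hpd : pd j (fun y => exp (y ⬝ᵥ M *ᵥ y + r ⬝ᵥ y + c))
      = fun y => exp (y ⬝ᵥ M *ᵥ y + r ⬝ᵥ y + c) * ((Mᵀ + M) *ᵥ y + r) j :=
    funext fun y => pd_exp_quadratic M r y c j
  have hgrad : HasDerivAt (fun s => ((Mᵀ + M) *ᵥ Function.update x i s + r) j) ((Mᵀ + M) j i)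
      (x i) := by
    simpa [mulVec_single_one] using
      hasDerivAt_pi.1 (((hasDerivAt_update x i (x i)).mulVec (Mᵀ + M)).add_const r) j
  rw [hpd, pd, ((hasDerivAt_quadratic_update M r x c i).exp.fun_mul hgrad).deriv]
  simp only [Function.update_eq_self]
  ring

theorem generator_exp_quadratic (v : Fin n → ℝ) (P : Matrix (Fin n) (Fin n) ℝ) :
    ∑ i, v i * pd i (fun y => exp (y ⬝ᵥ M *ᵥ y + r ⬝ᵥ y + c)) x
      + (1 / 2) * ∑ i, ∑ j, P i j * pd i (pd j (fun y => exp (y ⬝ᵥ M *ᵥ y + r ⬝ᵥ y + c))) x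
    = exp (x ⬝ᵥ M *ᵥ x + r ⬝ᵥ x + c) * (v ⬝ᵥ ((Mᵀ + M) *ᵥ x + r)
      + (1 / 2) * (((Mᵀ + M) *ᵥ x + r) ⬝ᵥ P *ᵥ ((Mᵀ + M) *ᵥ x + r) + trace (P * (Mᵀ + M)))) := by
  simp only [pd_exp_quadratic, pd_pd_exp_quadratic]
  set E := exp (x ⬝ᵥ M *ᵥ x + r ⬝ᵥ x + c)
  set ψ := (Mᵀ + M) *ᵥ x + r
  simp only [dotProduct, mulVec, trace, diag, mul_apply, Finset.mul_sum,
    ← Finset.sum_add_distrib, mul_add]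
  exact Finset.sum_congr rfl fun i _ => by ring_nf

end QuadraticExponential

/-- The bracket of the proof sketch at a fixed time, with `M = R₂ t`, `N = R₁ t` and `M'`, `N'`
their derivatives. -/
theorem riccati_bracket_eq_zero {ι K : Type*} [Fintype ι] [Field K] [CharZero K]
    (A σ M M' : Matrix ι ι K) (B : Matrix ι (Fin 1) K) (N N' : Matrix (Fin 1) ι K) (x : ι → K)
    (hM' : M' + (Mᵀ + M) * A + (1 / 2 : K) • ((Mᵀ + M) * (σ * σᵀ) * (Mᵀ + M)) = 0)
    (hN' : N' + N * (A + σ * σᵀ * (Mᵀ + M)) + Bᵀ * (Mᵀ + M) = 0) :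
    x ⬝ᵥ M' *ᵥ x + (N' *ᵥ x) 0
      + -((N * B) 0 0 + (1 / 2) * (N * (σ * σᵀ) * Nᵀ) 0 0 + trace (σᵀ * M * σ))
      + ((A *ᵥ x + Bᵀ 0) ⬝ᵥ ((Mᵀ + M) *ᵥ x + N 0)
        + (1 / 2) * (((Mᵀ + M) *ᵥ x + N 0) ⬝ᵥ (σ * σᵀ) *ᵥ ((Mᵀ + M) *ᵥ x + N 0)
          + trace (σ * σᵀ * (Mᵀ + M)))) = 0 := by
  have hS : (Mᵀ + M).IsSymm := by simp [IsSymm, add_comm]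
  have hP : (σ * σᵀ).IsSymm := isSymm_mul_transpose_self σ
  rw [eq_neg_of_add_eq_zero_left ((add_assoc _ _ _).symm.trans hM'),
    eq_neg_of_add_eq_zero_left ((add_assoc _ _ _).symm.trans hN'),
    trace_transpose_mul_mul_eq_half_trace_mul_transpose_add_self]
  have hrow : ∀ (L : Matrix (Fin 1) ι K) v, (L *ᵥ v) 0 = L 0 ⬝ᵥ v := fun _ _ => rfl
  have hNB : (N * B) 0 0 = N 0 ⬝ᵥ Bᵀ 0 := rfl
  have hNPN : (N * (σ * σᵀ) * Nᵀ) 0 0 = N 0 ⬝ᵥ (σ * σᵀ) *ᵥ N 0 := by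
    rw [dotProduct_mulVec]; rfl
  set S := Mᵀ + M
  set P := σ * σᵀ
  simp only [neg_mulVec, add_mulVec, smul_mulVec, ← mulVec_mulVec, mulVec_add, Pi.add_apply,
    Pi.neg_apply, dotProduct_add, add_dotProduct, dotProduct_neg, dotProduct_smul, smul_eq_mul]
  simp only [hrow, hNB, hNPN]
  rw [hS.dotProduct_mulVec_comm_s12 x, hS.dotProduct_mulVec_comm_s12 x,
    hP.dotProduct_mulVec_comm_s12 (S *ᵥ x) (N 0), dotProduct_comm (A *ᵥ x) (N 0),
    dotProduct_comm (Bᵀ 0) (N 0), dotProduct_comm (P *ᵥ S *ᵥ x)]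
  ring

theorem statement12_general (n : ℕ) (T : ℝ) (hT : 0 < T)
    (A σ : Matrix (Fin n) (Fin n) ℝ) (B : Matrix (Fin n) (Fin 1) ℝ)
    (Θ : Matrix (Fin n) (Fin n) ℝ) (θ : Matrix (Fin 1) (Fin n) ℝ) (γ : ℝ)
    (R₂ : ℝ → Matrix (Fin n) (Fin n) ℝ)
    (hR₂smooth : ContDiffOn ℝ 1 R₂ (Icc 0 T))
    (hR₂ode : ∀ t ∈ Icc 0 T,
      derivWithin R₂ (Icc 0 T) t + ((R₂ t)ᵀ + R₂ t) * A
        + (1 / 2 : ℝ) • (((R₂ t)ᵀ + R₂ t) * (σ * σᵀ) * ((R₂ t)ᵀ + R₂ t)) = 0)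
    (hR₂T : R₂ T = Θ)
    (R₁ : ℝ → Matrix (Fin 1) (Fin n) ℝ)
    (hR₁smooth : ContDiffOn ℝ 1 R₁ (Icc 0 T))
    (hR₁ode : ∀ t ∈ Icc 0 T,
      derivWithin R₁ (Icc 0 T) t
        + R₁ t * (A + (σ * σᵀ) * ((R₂ t)ᵀ + R₂ t))
        + Bᵀ * ((R₂ t)ᵀ + R₂ t) = 0)
    (hR₁T : R₁ T = θ)
    (R₀ : ℝ → ℝ)
    (hR₀ : ∀ t, R₀ t = γ + ∫ s in t..T,
      ((R₁ s * B) 0 0 + (1 / 2) * (R₁ s * (σ * σᵀ) * (R₁ s)ᵀ) 0 0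
        + Matrix.trace (σᵀ * R₂ s * σ)))
    (g : ℝ → (Fin n → ℝ) → ℝ)
    (hg : ∀ t x, g t x =
      Real.exp (x ⬝ᵥ (R₂ t).mulVec x + (R₁ t).mulVec x 0 + R₀ t)) :
    (∀ t ∈ Icc 0 T, ∀ x : Fin n → ℝ,
      derivWithin (fun τ => g τ x) (Icc 0 T) t
        + (∑ i, (A.mulVec x i + B i 0) * pd i (g t) x)
        + (1 / 2) * ∑ i, ∑ j, (σ * σᵀ) i j * pd i (pd j (g t)) x = 0) ∧
    (∀ x : Fin n → ℝ, g T x =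
      Real.exp (x ⬝ᵥ Θ.mulVec x + θ.mulVec x 0 + γ)) := by
  refine ⟨fun t ht x => ?_, fun x => by simp [hg, hR₂T, hR₁T, hR₀]⟩
  set φ := fun s => (R₁ s * B) 0 0 + (1 / 2) * (R₁ s * (σ * σᵀ) * (R₁ s)ᵀ) 0 0
    + trace (σᵀ * R₂ s * σ)
  have hφ : ContinuousOn φ (Icc 0 T) := by
    have hF : Continuous fun p : Matrix (Fin 1) (Fin n) ℝ × Matrix (Fin n) (Fin n) ℝ =>
        (p.1 * B) 0 0 + (1 / 2) * (p.1 * (σ * σᵀ) * p.1ᵀ) 0 0 + trace (σᵀ * p.2 * σ) := by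
      fun_prop
    exact hF.comp_continuousOn (hR₁smooth.continuousOn.prodMk hR₂smooth.continuousOn)
  have hR₀' : HasDerivWithinAt R₀ (-φ t) (Icc 0 T) t := by
    rw [funext hR₀]
    exact (hasDerivWithinAt_intervalIntegral_Icc_left hφ ht).const_add γ
  have hR₂' := ((hR₂smooth.differentiableOn one_ne_zero) t ht).hasDerivWithinAt
  have hR₁' := ((hR₁smooth.differentiableOn one_ne_zero) t ht).hasDerivWithinAt
  have hrow : ∀ K : Matrix (Fin 1) (Fin n) ℝ, (K *ᵥ x) 0 = Pi.single 0 1 ⬝ᵥ K *ᵥ x := by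
    simp
  have htime : HasDerivWithinAt (fun τ => g τ x) (g t x * (x ⬝ᵥ derivWithin R₂ (Icc 0 T) t *ᵥ x
      + (derivWithin R₁ (Icc 0 T) t *ᵥ x) 0 + -φ t)) (Icc 0 T) t := by
    simp only [hg, hrow]
    exact (((hR₂'.dotProduct_mulVec x x).add (hR₁'.dotProduct_mulVec _ x)).add hR₀').exp
  have hgt : g t = fun y => exp (y ⬝ᵥ R₂ t *ᵥ y + R₁ t 0 ⬝ᵥ y + R₀ t) := funext (hg t)
  have hspace := generator_exp_quadratic (R₂ t) (R₁ t 0) x (R₀ t) (A *ᵥ x + Bᵀ 0) (σ * σᵀ)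
  simp only [Pi.add_apply, transpose_apply] at hspace
  rw [htime.derivWithin (uniqueDiffOn_Icc hT t ht), add_assoc, hgt, hspace, ← mul_add]
  exact mul_eq_zero_of_right _
    (riccati_bracket_eq_zero A σ (R₂ t) _ B (R₁ t) _ x (hR₂ode t ht) (hR₁ode t ht))

/-- With `R₂ᴳ`, `R₁ᴳ` solving the futures Riccati equations and `R₀ᴳ` its
integral, `g(t,x) = exp(xᵀR₂ᴳ(t)x + R₁ᴳ(t)x + R₀ᴳ(t))` solves the backward Kolmogorov PDE
`∂g/∂t + (Ax+B)·∇ₓg + (1/2)Σ (σσᵀ)ᵢⱼ ∂²g/∂xᵢ∂xⱼ = 0` with terminal value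
`g(T,x) = exp(xᵀΘx + θx + γ)`. -/
theorem statement12 (n : ℕ) (hn : 1 ≤ n) (T : ℝ) (hT : 0 < T)
    (A σ : Matrix (Fin n) (Fin n) ℝ) (B : Matrix (Fin n) (Fin 1) ℝ)
    (Θ : Matrix (Fin n) (Fin n) ℝ) (θ : Matrix (Fin 1) (Fin n) ℝ) (γ : ℝ)
    (R₂ : ℝ → Matrix (Fin n) (Fin n) ℝ)
    (hR₂smooth : ContDiffOn ℝ 1 R₂ (Icc 0 T))
    (hR₂ode : ∀ t ∈ Icc 0 T,
      derivWithin R₂ (Icc 0 T) t + ((R₂ t)ᵀ + R₂ t) * A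
        + (1 / 2 : ℝ) • (((R₂ t)ᵀ + R₂ t) * (σ * σᵀ) * ((R₂ t)ᵀ + R₂ t)) = 0)
    (hR₂T : R₂ T = Θ)
    (R₁ : ℝ → Matrix (Fin 1) (Fin n) ℝ)
    (hR₁smooth : ContDiffOn ℝ 1 R₁ (Icc 0 T))
    (hR₁ode : ∀ t ∈ Icc 0 T,
      derivWithin R₁ (Icc 0 T) t
        + R₁ t * (A + (σ * σᵀ) * ((R₂ t)ᵀ + R₂ t))
        + Bᵀ * ((R₂ t)ᵀ + R₂ t) = 0)
    (hR₁T : R₁ T = θ)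
    (R₀ : ℝ → ℝ)
    (hR₀ : ∀ t, R₀ t = γ + ∫ s in t..T,
      ((R₁ s * B) 0 0 + (1 / 2) * (R₁ s * (σ * σᵀ) * (R₁ s)ᵀ) 0 0
        + Matrix.trace (σᵀ * R₂ s * σ)))
    (g : ℝ → (Fin n → ℝ) → ℝ)
    (hg : ∀ t x, g t x =
      Real.exp (x ⬝ᵥ (R₂ t).mulVec x + (R₁ t).mulVec x 0 + R₀ t)) :
    (∀ t ∈ Icc 0 T, ∀ x : Fin n → ℝ,
      derivWithin (fun τ => g τ x) (Icc 0 T) t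
        + (∑ i, (A.mulVec x i + B i 0) * pd i (g t) x)
        + (1 / 2) * ∑ i, ∑ j, (σ * σᵀ) i j * pd i (pd j (g t)) x = 0) ∧
    (∀ x : Fin n → ℝ, g T x =
      Real.exp (x ⬝ᵥ Θ.mulVec x + θ.mulVec x 0 + γ)) :=
  statement12_general n T hT A σ B Θ θ γ R₂ hR₂smooth hR₂ode hR₂T R₁ hR₁smooth hR₁ode hR₁T R₀ hR₀ g
    hg
end

section
/- Suppose c > 0 and σ ≠ 0, and set η = √(β² + 2cσ²). Define A(τ) := 2c(e^{2ητ} − 1)/(β − η − (β + η)e^{2ητ}) for τ ≥ 0. Then the denominator β − η − (β + η)e^{2ητ} is strictly negative for all τ ≥ 0, A(0) = 0, and A is differentiable on [0,∞) with A'(τ) = σ²A(τ)² − 2βA(τ) − 2c for all τ ≥ 0. -/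
open Set

/-! Since `2cσ² > 0`, `η = √(β² + 2cσ²)` exceeds `|β|`, so `β - η < 0 < β + η` and the
denominator is negative for every value of the exponential. The Riccati equation is the
quotient rule followed by the identity `η² - β² = 2cσ²`. -/

noncomputable def riccatiSolution (β η c τ : ℝ) : ℝ :=
  2 * c * (Real.exp (2 * η * τ) - 1) / (β - η - (β + η) * Real.exp (2 * η * τ))

lemma abs_lt_sqrt_sq_add {b d : ℝ} (hd : 0 < d) : |b| < Real.sqrt (b ^ 2 + d) :=
  (Real.lt_sqrt (abs_nonneg b)).2 (by rw [sq_abs]; linarith)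

lemma sub_sub_mul_exp_neg {β η : ℝ} (h : |β| < η) (x : ℝ) :
    β - η - (β + η) * Real.exp x < 0 := by
  obtain ⟨hlt, hgt⟩ := abs_lt.1 h
  nlinarith [Real.exp_pos x]

lemma hasDerivAt_riccatiSolution {β η c σ τ : ℝ} (hη : η ^ 2 = β ^ 2 + 2 * c * σ ^ 2)
    (hD : β - η - (β + η) * Real.exp (2 * η * τ) ≠ 0) :
    HasDerivAt (riccatiSolution β η c)
      (σ ^ 2 * riccatiSolution β η c τ ^ 2 - 2 * β * riccatiSolution β η c τ - 2 * c) τ := by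
  have hE : HasDerivAt (fun t => Real.exp (2 * η * t)) (Real.exp (2 * η * τ) * (2 * η)) τ := by
    simpa using ((hasDerivAt_id τ).const_mul (2 * η)).exp
  have hquot := ((hE.sub_const 1).const_mul (2 * c)).div
    ((hE.const_mul (β + η)).const_sub (β - η)) hD
  refine hquot.congr_deriv ?_
  unfold riccatiSolution
  set E := Real.exp (2 * η * τ)
  set D := β - η - (β + η) * E with hDdef
  field_simp
  rw [hDdef]
  linear_combination (c * (E - 1) ^ 2) * hη

/-- For `c > 0`, `σ ≠ 0` and `η = √(β² + 2cσ²)`, the function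
`A(τ) = 2c(e^{2ητ} - 1)/(β - η - (β + η)e^{2ητ})` has strictly negative denominator on
`[0,∞)`, satisfies `A(0) = 0`, and solves `A' = σ²A² - 2βA - 2c` on `[0,∞)`. -/
theorem statement16 (β σ c : ℝ) (hc : 0 < c) (hσ : σ ≠ 0)
    (η : ℝ) (hη : η = Real.sqrt (β ^ 2 + 2 * c * σ ^ 2))
    (A : ℝ → ℝ)
    (hA : ∀ τ, A τ = 2 * c * (Real.exp (2 * η * τ) - 1)
      / (β - η - (β + η) * Real.exp (2 * η * τ))) :
    (∀ τ ≥ (0 : ℝ), β - η - (β + η) * Real.exp (2 * η * τ) < 0) ∧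
    A 0 = 0 ∧
    (∀ τ ∈ Ici (0 : ℝ),
      HasDerivWithinAt A (σ ^ 2 * (A τ) ^ 2 - 2 * β * A τ - 2 * c) (Ici 0) τ) := by
  have hd : 0 < 2 * c * σ ^ 2 := by positivity
  have hβη : |β| < η := hη ▸ abs_lt_sqrt_sq_add hd
  have hη2 : η ^ 2 = β ^ 2 + 2 * c * σ ^ 2 := by rw [hη, Real.sq_sqrt (by positivity)]
  have hAsol : A = riccatiSolution β η c := funext hA
  subst hAsol
  refine ⟨fun τ _ => sub_sub_mul_exp_neg hβη _, by simp [riccatiSolution], fun τ _ => ?_⟩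
  exact (hasDerivAt_riccatiSolution hη2 (sub_sub_mul_exp_neg hβη _).ne).hasDerivWithinAt
end

section
/- Suppose c > 0, σ ≠ 0 and β ≠ 0, set η = √(β² + 2cσ²), let A(τ) := 2c(e^{2ητ} − 1)/(β − η − (β + η)e^{2ητ}), and let B(τ) := { [αβ + (bσ² − αβ²)β/η²]·[−(β + η)(e^{2ητ} − 1) − 2η] + ((bσ² − αβ²)(β² − η²)/η²)·(e^{2ητ} − 1) + 2ηe^{ητ}·(bσ²η² − 2cσ²(bσ² − αβ²))/(βη²) } / { σ²[(β + η)(e^{2ητ} − 1) + 2η] }. Define C(τ) := [(b²σ² − 2αβ²b − 2α²β²c)/(2η²)]·τ + (1/2)·log( 2ηe^{(η+β)τ} / ((β + η)e^{2ητ} + η − β) ) + [2c(bσ² − αβ²)² + 2β(b + 2cα)(bσ² − αβ²)(β + η)e^{ητ} − β²σ²(b + 2cα)²] / ( η³(β + η)[(β + η)e^{2ητ} + η − β] ) + [β²σ²(b + 2cα)² − 2c(bσ² − αβ²)² − 2β(b + 2cα)(bσ² − αβ²)(β + η)] / ( 2η⁴(β + η) ) − aτ for τ ≥ 0. Then C(0)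 = 0 and C is differentiable on [0,∞) with C'(τ) = αβB(τ) + (1/2)σ²B(τ)² + (1/2)σ²A(τ) − a for all τ ≥ 0. -/
/-!
Put `E = exp (η τ)`. Every term of `A`, `B` and `C` is rational in `E` over the common denominator
`D = (β + η) E² + η - β`, which is positive because `|β| < η`. Split `C = R + L - a τ` with
`L = ½ log (2 η e^{(η + β) τ} / D)`: then `L' = σ² A / 2` and `R' = α β B + σ² B² / 2`, both
rational identities in `E` once `c` is eliminated through `η² = β² + 2 c σ²`, and `R 0 = L 0 = 0`.
-/

open Real Set

noncomputable section

def riccatiDen (β η τ : ℝ) : ℝ := (β + η) * exp (2 * η * τ) + η - β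

def riccatiB (α β σ b c η τ : ℝ) : ℝ :=
  ((α * β + (b * σ ^ 2 - α * β ^ 2) * β / η ^ 2)
          * (-(β + η) * (exp (2 * η * τ) - 1) - 2 * η)
        + (b * σ ^ 2 - α * β ^ 2) * (β ^ 2 - η ^ 2) / η ^ 2
          * (exp (2 * η * τ) - 1)
        + 2 * η * exp (η * τ)
          * (b * σ ^ 2 * η ^ 2 - 2 * c * σ ^ 2 * (b * σ ^ 2 - α * β ^ 2))
          / (β * η ^ 2))
      / (σ ^ 2 * ((β + η) * (exp (2 * η * τ) - 1) + 2 * η))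

def riccatiA (β c η τ : ℝ) : ℝ :=
  2 * c * (exp (2 * η * τ) - 1) / (β - η - (β + η) * exp (2 * η * τ))

def logTerm (β η τ : ℝ) : ℝ := 1 / 2 * log (2 * η * exp ((η + β) * τ) / riccatiDen β η τ)

def rationalTerm (α β σ b c η τ : ℝ) : ℝ :=
  (b ^ 2 * σ ^ 2 - 2 * α * β ^ 2 * b - 2 * α ^ 2 * β ^ 2 * c) / (2 * η ^ 2) * τ
    + (2 * c * (b * σ ^ 2 - α * β ^ 2) ^ 2
        + 2 * β * (b + 2 * c * α) * (b * σ ^ 2 - α * β ^ 2) * (β + η) * exp (η * τ)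
        - β ^ 2 * σ ^ 2 * (b + 2 * c * α) ^ 2)
      / (η ^ 3 * (β + η) * riccatiDen β η τ)
    + (β ^ 2 * σ ^ 2 * (b + 2 * c * α) ^ 2
        - 2 * c * (b * σ ^ 2 - α * β ^ 2) ^ 2
        - 2 * β * (b + 2 * c * α) * (b * σ ^ 2 - α * β ^ 2) * (β + η))
      / (2 * η ^ 4 * (β + η))

end

theorem exp_two_mul_mul (η τ : ℝ) : exp (2 * η * τ) = exp (η * τ) ^ 2 := by
  rw [sq, ← exp_add]; ring_nf

theorem hasDerivAt_riccatiDen (β η τ : ℝ) :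
    HasDerivAt (riccatiDen β η) (2 * η * (β + η) * exp (2 * η * τ)) τ := by
  exact (((((hasDerivAt_id' τ).const_mul (2 * η)).exp).const_mul (β + η)).add_const η
    |>.sub_const β).congr_deriv (by ring)

variable {α β σ b c η : ℝ}

theorem riccatiDen_pos (h : |β| < η) (τ : ℝ) : 0 < riccatiDen β η τ := by
  obtain ⟨hlo, hhi⟩ := abs_lt.mp h
  have hexp := exp_pos (2 * η * τ)
  unfold riccatiDen; nlinarith

theorem eq_sq_sub_sq_div_of_sq_eq (hσ : σ ≠ 0) (hη2 : η ^ 2 = β ^ 2 + 2 * c * σ ^ 2) :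
    c = (η ^ 2 - β ^ 2) / (2 * σ ^ 2) := by
  rw [eq_div_iff (by positivity)]; linear_combination -hη2

/-- `B` simplifies because `α β η² + (b σ² - α β²) β = β σ² (b + 2 c α)` and
`b σ² η² - 2 c σ² (b σ² - α β²) = β² σ² (b + 2 c α)`. -/
theorem riccatiB_eq (hη2 : η ^ 2 = β ^ 2 + 2 * c * σ ^ 2) (hσ : σ ≠ 0) (hβ : β ≠ 0) (hη : η ≠ 0)
    {τ : ℝ} (hD : riccatiDen β η τ ≠ 0) :
    riccatiB α β σ b c η τ =
      -(β * (b + 2 * c * α) / η ^ 2)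
        - 2 * c * (b * σ ^ 2 - α * β ^ 2) * (exp (2 * η * τ) - 1) / (η ^ 2 * riccatiDen β η τ)
        + 2 * β * (b + 2 * c * α) * exp (η * τ) / (η * riccatiDen β η τ) := by
  have hden : (β + η) * (exp (2 * η * τ) - 1) + 2 * η = riccatiDen β η τ := by
    unfold riccatiDen; ring
  rw [riccatiB, hden]
  unfold riccatiDen at hD ⊢
  rw [exp_two_mul_mul] at *
  generalize exp (η * τ) = E at *
  rw [eq_sq_sub_sq_div_of_sq_eq hσ hη2]
  field_simp
  ring

theorem hasDerivAt_rationalTerm (hη2 : η ^ 2 = β ^ 2 + 2 * c * σ ^ 2) (hσ : σ ≠ 0) (hβ : β ≠ 0)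
    (hβη : |β| < η) (τ : ℝ) :
    HasDerivAt (rationalTerm α β σ b c η)
      (α * β * riccatiB α β σ b c η τ + 1 / 2 * σ ^ 2 * riccatiB α β σ b c η τ ^ 2) τ := by
  have hη : 0 < η := (abs_nonneg β).trans_lt hβη
  have hβη' : 0 < β + η := by linarith [neg_abs_le β]
  have hD := riccatiDen_pos hβη τ
  have hexp := ((hasDerivAt_id' τ).const_mul η).exp
  refine (((((hasDerivAt_id' τ).const_mul _).add
    ((((hexp.const_mul _).const_add _).sub_const _).div
      ((hasDerivAt_riccatiDen β η τ).const_mul (η ^ 3 * (β + η))) (by positivity))).add_const _)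
    ).congr_deriv ?_
  rw [riccatiB_eq hη2 hσ hβ hη.ne' hD.ne']
  unfold riccatiDen at hD ⊢
  rw [exp_two_mul_mul] at *
  generalize exp (η * τ) = E at *
  rw [eq_sq_sub_sq_div_of_sq_eq hσ hη2]
  field_simp
  ring

theorem rationalTerm_zero : rationalTerm α β σ b c η 0 = 0 := by
  simp only [rationalTerm, riccatiDen, mul_zero, exp_zero]
  ring

theorem logTerm_zero (hη : η ≠ 0) : logTerm β η 0 = 0 := by
  simp only [logTerm, riccatiDen, mul_zero, exp_zero, mul_one]
  rw [show β + η + η - β = 2 * η by ring, div_self (by positivity), log_one, mul_zero]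

theorem hasDerivAt_logTerm (hη2 : η ^ 2 = β ^ 2 + 2 * c * σ ^ 2) (hβη : |β| < η) (τ : ℝ) :
    HasDerivAt (logTerm β η) (1 / 2 * σ ^ 2 * riccatiA β c η τ) τ := by
  have hη : 0 < η := (abs_nonneg β).trans_lt hβη
  have hD := riccatiDen_pos hβη
  have hlog : logTerm β η =
      fun t => 1 / 2 * (log (2 * η) + (η + β) * t - log (riccatiDen β η t)) := by
    funext t
    rw [logTerm, log_div (by positivity) (hD t).ne', log_mul (by positivity) (exp_pos _).ne',
      log_exp]
  rw [hlog]
  refine (((((hasDerivAt_id' τ).const_mul (η + β)).const_add (log (2 * η))).sub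
    ((hasDerivAt_riccatiDen β η τ).log (hD τ).ne')).const_mul (1 / 2)).congr_deriv ?_
  have hA : β - η - (β + η) * exp (2 * η * τ) = -riccatiDen β η τ := by unfold riccatiDen; ring
  rw [riccatiA, hA]
  have hDne := (hD τ).ne'
  field_simp
  unfold riccatiDen
  linear_combination (1 - exp (2 * η * τ)) * hη2

/-- For `c > 0`, `σ ≠ 0`, `β ≠ 0`, the explicit function `C(τ)` satisfies
`C(0) = 0` and solves `C' = αβB + (1/2)σ²B² + (1/2)σ²A - a` on `[0,∞)`. -/
theorem statement18 (α β σ a b c : ℝ) (hc : 0 < c) (hσ : σ ≠ 0) (hβ : β ≠ 0)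
    (η : ℝ) (hη : η = Real.sqrt (β ^ 2 + 2 * c * σ ^ 2))
    (A : ℝ → ℝ)
    (hA : ∀ τ, A τ = 2 * c * (Real.exp (2 * η * τ) - 1)
      / (β - η - (β + η) * Real.exp (2 * η * τ)))
    (B : ℝ → ℝ)
    (hB : ∀ τ, B τ =
      ((α * β + (b * σ ^ 2 - α * β ^ 2) * β / η ^ 2)
          * (-(β + η) * (Real.exp (2 * η * τ) - 1) - 2 * η)
        + (b * σ ^ 2 - α * β ^ 2) * (β ^ 2 - η ^ 2) / η ^ 2
          * (Real.exp (2 * η * τ) - 1)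
        + 2 * η * Real.exp (η * τ)
          * (b * σ ^ 2 * η ^ 2 - 2 * c * σ ^ 2 * (b * σ ^ 2 - α * β ^ 2))
          / (β * η ^ 2))
      / (σ ^ 2 * ((β + η) * (Real.exp (2 * η * τ) - 1) + 2 * η)))
    (C : ℝ → ℝ)
    (hC : ∀ τ, C τ =
      (b ^ 2 * σ ^ 2 - 2 * α * β ^ 2 * b - 2 * α ^ 2 * β ^ 2 * c) / (2 * η ^ 2) * τ
      + (1 / 2) * Real.log (2 * η * Real.exp ((η + β) * τ)
          / ((β + η) * Real.exp (2 * η * τ) + η - β))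
      + (2 * c * (b * σ ^ 2 - α * β ^ 2) ^ 2
          + 2 * β * (b + 2 * c * α) * (b * σ ^ 2 - α * β ^ 2) * (β + η)
            * Real.exp (η * τ)
          - β ^ 2 * σ ^ 2 * (b + 2 * c * α) ^ 2)
        / (η ^ 3 * (β + η) * ((β + η) * Real.exp (2 * η * τ) + η - β))
      + (β ^ 2 * σ ^ 2 * (b + 2 * c * α) ^ 2
          - 2 * c * (b * σ ^ 2 - α * β ^ 2) ^ 2
          - 2 * β * (b + 2 * c * α) * (b * σ ^ 2 - α * β ^ 2) * (β + η))
        / (2 * η ^ 4 * (β + η))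
      - a * τ) :
    C 0 = 0 ∧
    (∀ τ ∈ Ici (0 : ℝ),
      HasDerivWithinAt C
        (α * β * B τ + (1 / 2) * σ ^ 2 * (B τ) ^ 2 + (1 / 2) * σ ^ 2 * A τ - a)
        (Ici 0) τ) := by
  have hpos : 0 < β ^ 2 + 2 * c * σ ^ 2 := by positivity
  have hη0 : 0 < η := hη ▸ sqrt_pos.2 hpos
  have hη2 : η ^ 2 = β ^ 2 + 2 * c * σ ^ 2 := hη ▸ sq_sqrt hpos.le
  have hβη : |β| < η := abs_lt_of_sq_lt_sq (by nlinarith [sq_pos_of_ne_zero hσ]) hη0.le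
  obtain rfl : A = riccatiA β c η := funext hA
  obtain rfl : B = riccatiB α β σ b c η := funext hB
  obtain rfl : C = fun τ => rationalTerm α β σ b c η τ + logTerm β η τ - a * τ := by
    funext τ
    simp only [hC, rationalTerm, logTerm, riccatiDen]
    ring
  refine ⟨by simp [rationalTerm_zero, logTerm_zero hη0.ne'], fun τ _ => ?_⟩
  exact (((hasDerivAt_rationalTerm hη2 hσ hβ hβη τ).add (hasDerivAt_logTerm hη2 hβη τ)).sub
    ((hasDerivAt_id' τ).const_mul a)).hasDerivWithinAt.congr_deriv (by ring)
end

section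
/- Let T > 0 and suppose A, B, C : [0,T] → ℝ are differentiable functions with A(0) = B(0) = C(0) = 0 satisfying, for all τ ∈ [0,T], A'(τ) = σ²A(τ)² − 2βA(τ) − 2c, B'(τ) = αβA(τ) − βB(τ) + σ²A(τ)B(τ) − b, and C'(τ) = αβB(τ) + (1/2)σ²B(τ)² + (1/2)σ²A(τ) − a. Then the function P(t,x) := exp( (1/2)A(T−t)x² + B(T−t)x + C(T−t) ) satisfies, for all (t,x) ∈ [0,T] × ℝ, the term-structure partial differential equation ∂P/∂t(t,x) + β(α − x)·∂P/∂x(t,x) + (1/2)σ²·∂²P/∂x²(t,x) = (cx² + bx + a)·P(t,x), together with the terminal condition P(T,x) = 1 for all x ∈ ℝ. -/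
/-!
Since `P(t, ·)` is the exponential of a quadratic polynomial in `x`, each term of the PDE is `P`
times a quadratic polynomial in `x`; with `τ = T - t` (so `∂ₜ = -∂_τ`), the coefficients of `x²`,
`x` and `1` match exactly by the Riccati system for `A`, `B`, `C`. The terminal condition is
`exp 0 = 1`.
-/

open Set

theorem HasDerivWithinAt.comp_const_sub {𝕜 F : Type*} [NontriviallyNormedField 𝕜]
    [NormedAddCommGroup F] [NormedSpace 𝕜 F] {f : 𝕜 → F} {f' : F} {s t : Set 𝕜} {a x : 𝕜}
    (hf : HasDerivWithinAt f f' s (a - x)) (hst : MapsTo (a - ·) t s) :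
    HasDerivWithinAt (fun x ↦ f (a - x)) (-f') t x := by
  simpa [Function.comp_def] using hf.scomp x ((hasDerivWithinAt_id x t).const_sub a) hst

theorem mapsTo_const_sub_Icc_self (T : ℝ) : MapsTo (T - ·) (Icc 0 T) (Icc 0 T) :=
  fun _ ⟨h₀, hT⟩ ↦ ⟨by linarith, by linarith⟩

theorem HasDerivWithinAt.exp_quadratic {A B C : ℝ → ℝ} {A' B' C' : ℝ} {s : Set ℝ} {t : ℝ}
    (hA : HasDerivWithinAt A A' s t) (hB : HasDerivWithinAt B B' s t)
    (hC : HasDerivWithinAt C C' s t) (x : ℝ) :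
    HasDerivWithinAt (fun τ ↦ Real.exp (1 / 2 * A τ * x ^ 2 + B τ * x + C τ))
      ((1 / 2 * A' * x ^ 2 + B' * x + C') * Real.exp (1 / 2 * A t * x ^ 2 + B t * x + C t))
      s t := by
  rw [mul_comm (1 / 2 * A' * x ^ 2 + B' * x + C')]
  exact (((hA.const_mul (1 / 2)).mul_const (x ^ 2)).add (hB.mul_const x)).add hC |>.exp

theorem hasDerivAt_exp_quadratic (p q r y : ℝ) :
    HasDerivAt (fun y ↦ Real.exp (1 / 2 * p * y ^ 2 + q * y + r))
      ((p * y + q) * Real.exp (1 / 2 * p * y ^ 2 + q * y + r)) y := by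
  have hpoly : HasDerivAt (fun y ↦ 1 / 2 * p * y ^ 2 + q * y + r) (p * y + q) y := by
    refine ((((hasDerivAt_pow 2 y).const_mul (1 / 2 * p)).add
      ((hasDerivAt_id' y).const_mul q)).add_const r).congr_deriv ?_
    push_cast
    ring
  rw [mul_comm (p * y + q)]
  exact hpoly.exp

theorem deriv_deriv_exp_quadratic (p q r y : ℝ) :
    deriv (deriv fun y ↦ Real.exp (1 / 2 * p * y ^ 2 + q * y + r)) y
      = (p + (p * y + q) ^ 2) * Real.exp (1 / 2 * p * y ^ 2 + q * y + r) := by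
  have hderiv : deriv (fun y ↦ Real.exp (1 / 2 * p * y ^ 2 + q * y + r))
      = fun y ↦ (p * y + q) * Real.exp (1 / 2 * p * y ^ 2 + q * y + r) :=
    funext fun y ↦ (hasDerivAt_exp_quadratic p q r y).deriv
  have hlin : HasDerivAt (fun y ↦ p * y + q) p y := by
    simpa using ((hasDerivAt_id y).const_mul p).add_const q
  have hprod : HasDerivAt (fun y ↦ (p * y + q) * Real.exp (1 / 2 * p * y ^ 2 + q * y + r))
      (p * Real.exp (1 / 2 * p * y ^ 2 + q * y + r)
        + (p * y + q) * ((p * y + q) * Real.exp (1 / 2 * p * y ^ 2 + q * y + r))) y :=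
    hlin.mul (hasDerivAt_exp_quadratic p q r y)
  rw [hderiv, hprod.deriv]
  ring

/-- If `A`, `B`, `C` vanish at `0` and solve the Riccati-type system of
ODEs on `[0,T]`, then `P(t,x) = exp((1/2)A(T-t)x² + B(T-t)x + C(T-t))` solves the
term-structure PDE `∂P/∂t + β(α - x)∂P/∂x + (1/2)σ²∂²P/∂x² = (cx² + bx + a)P` with
terminal condition `P(T,·) = 1`. -/
theorem statement19 (α β σ a b c : ℝ) (T : ℝ) (hT : 0 < T)
    (A B C : ℝ → ℝ)
    (hA0 : A 0 = 0) (hB0 : B 0 = 0) (hC0 : C 0 = 0)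
    (hA : ∀ τ ∈ Icc (0 : ℝ) T,
      HasDerivWithinAt A (σ ^ 2 * (A τ) ^ 2 - 2 * β * A τ - 2 * c) (Icc 0 T) τ)
    (hB : ∀ τ ∈ Icc (0 : ℝ) T,
      HasDerivWithinAt B (α * β * A τ - β * B τ + σ ^ 2 * A τ * B τ - b) (Icc 0 T) τ)
    (hC : ∀ τ ∈ Icc (0 : ℝ) T,
      HasDerivWithinAt C
        (α * β * B τ + (1 / 2) * σ ^ 2 * (B τ) ^ 2 + (1 / 2) * σ ^ 2 * A τ - a)
        (Icc 0 T) τ)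
    (P : ℝ → ℝ → ℝ)
    (hP : ∀ t x, P t x =
      Real.exp ((1 / 2) * A (T - t) * x ^ 2 + B (T - t) * x + C (T - t))) :
    (∀ t ∈ Icc (0 : ℝ) T, ∀ x : ℝ,
      derivWithin (fun τ => P τ x) (Icc 0 T) t
        + β * (α - x) * deriv (fun y => P t y) x
        + (1 / 2) * σ ^ 2 * deriv (deriv (P t)) x
      = (c * x ^ 2 + b * x + a) * P t x) ∧
    (∀ x : ℝ, P T x = 1) := by
  refine ⟨fun t ht x ↦ ?_, fun x ↦ by simp [hP, hA0, hB0, hC0]⟩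
  have hτ : T - t ∈ Icc 0 T := mapsTo_const_sub_Icc_self T ht
  have hmaps := mapsTo_const_sub_Icc_self T
  have htime := HasDerivWithinAt.exp_quadratic ((hA _ hτ).comp_const_sub hmaps)
    ((hB _ hτ).comp_const_sub hmaps) ((hC _ hτ).comp_const_sub hmaps) x
  have hPt : P t = fun y ↦ Real.exp (1 / 2 * A (T - t) * y ^ 2 + B (T - t) * y + C (T - t)) :=
    funext (hP t)
  rw [show (fun τ ↦ P τ x) = _ from funext fun τ ↦ hP τ x,
    htime.derivWithin (uniqueDiffOn_Icc hT t ht), hPt,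
    (hasDerivAt_exp_quadratic _ _ _ x).deriv, deriv_deriv_exp_quadratic]
  ring
end
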